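/- arXiv:math/0605258 — 6 statements merged into one kernel-verified Lean document; each statement's English description precedes it below -/
import Mathlib

section
/- The group of field automorphisms of the complex numbers has cardinality 2^(2^ℵ₀), i.e. the cardinality of the set of ring automorphisms of ℂ equals 2 raised to the power (2 raised to the power ℵ₀). -/
/-!
Every permutation of a transcendence basis of an algebraically closed field `K` extends to an
automorphism of `K`, and distinct permutations give distinct automorphisms. When `K` is
uncountable, a transcendence basis over the (countable) prime ring has cardinality `#K`, so
`2 ^ #K = #(Perm basis) ≤ #(K ≃+* K) ≤ #(Perm K) = 2 ^ #K`. For `ℂ`, `#ℂ = 2 ^ ℵ₀`.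
-/

open Cardinal

theorem Cardinal.mk_ringEquiv_le_two_power (α : Type*) [Mul α] [Add α] [Infinite α] :
    #(α ≃+* α) ≤ 2 ^ #α :=
  (mk_le_of_injective (f := RingEquiv.toEquiv) fun _ _ h ↦
    RingEquiv.ext (Equiv.ext_iff.1 h)).trans_eq mk_perm_eq_two_power

namespace IsAlgClosed

variable {K : Type*} [Field K] [IsAlgClosed K]

section TranscendenceBasis

variable {R L : Type*} [CommRing R] [Algebra R K] [Field L] [Algebra R L] [IsAlgClosed L]
  {ι κ : Type*} {v : ι → K} {w : κ → L}

theorem equivOfTranscendenceBasis_apply (e : ι ≃ κ) (hv : IsTranscendenceBasis R v)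
    (hw : IsTranscendenceBasis R w) (i : ι) :
    equivOfTranscendenceBasis v w e hv hw (v i) = w (e i) := by
  let := isAlgClosure_of_transcendence_basis v hv
  let := isAlgClosure_of_transcendence_basis w hw
  have hvi : v i = algebraMap (Algebra.adjoin R (Set.range v)) K
      (hv.1.aevalEquiv (MvPolynomial.X i)) := by
    rw [hv.1.algebraMap_aevalEquiv, MvPolynomial.aeval_X]
  rw [equivOfTranscendenceBasis, hvi, IsAlgClosure.equivOfEquiv_algebraMap]
  simp [hw.1.algebraMap_aevalEquiv]

theorem equivOfTranscendenceBasis_self_injective (hv : IsTranscendenceBasis R v) :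
    Function.Injective fun e : Equiv.Perm ι ↦ equivOfTranscendenceBasis v v e hv hv := by
  have := RingHom.domain_nontrivial (algebraMap R K)
  intro e₁ e₂ h
  ext i
  apply hv.1.injective
  simpa only [equivOfTranscendenceBasis_apply] using congr($h (v i))

theorem two_power_le_mk_ringEquiv_of_isTranscendenceBasis [Countable R] {s : Set K}
    (hs : IsTranscendenceBasis R ((↑) : s → K)) (hK : ℵ₀ < #K) :
    2 ^ #K ≤ #(K ≃+* K) := by
  have := RingHom.domain_nontrivial (algebraMap R K)
  have hsK : #K = #s := lift_inj.1 <|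
    cardinal_eq_cardinal_transcendence_basis_of_aleph0_lt _ hs mk_le_aleph0 hK
  have : Infinite s := infinite_iff.2 (hsK ▸ hK.le)
  rw [hsK, ← mk_perm_eq_two_power]
  exact mk_le_of_injective (equivOfTranscendenceBasis_self_injective hs)

end TranscendenceBasis

theorem two_power_le_mk_ringEquiv (hK : ℵ₀ < #K) : 2 ^ #K ≤ #(K ≃+* K) := by
  obtain ⟨p, _⟩ := CharP.exists K
  rcases CharP.char_is_prime_or_zero K p with hp | rfl
  · have := Fact.mk hp
    let := ZMod.algebra K p
    obtain ⟨s, hs⟩ := exists_isTranscendenceBasis (ZMod p) K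
    exact two_power_le_mk_ringEquiv_of_isTranscendenceBasis hs hK
  · have := CharP.charP_to_charZero K
    obtain ⟨s, hs⟩ := exists_isTranscendenceBasis ℤ K
    exact two_power_le_mk_ringEquiv_of_isTranscendenceBasis hs hK

theorem mk_ringEquiv_eq_two_power (hK : ℵ₀ < #K) : #(K ≃+* K) = 2 ^ #K :=
  have : Infinite K := infinite_iff.2 hK.le
  (mk_ringEquiv_le_two_power K).antisymm (two_power_le_mk_ringEquiv hK)

end IsAlgClosed

/-- The group of field automorphisms of the complex numbers has cardinality
`2 ^ (2 ^ ℵ₀)`. -/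
theorem card_ringAut_complex :
    Cardinal.mk (ℂ ≃+* ℂ) = 2 ^ ((2 : Cardinal) ^ Cardinal.aleph0) := by
  rw [IsAlgClosed.mk_ringEquiv_eq_two_power (mk_complex ▸ aleph0_lt_continuum), mk_complex,
    two_power_aleph0]
end

section
/- Let P ∈ ℂ[z] be a normalized polynomial of degree n ≥ 1, i.e. P is monic of degree n and the coefficient of z^{n-1} in P is 0. Then all coefficients of P are algebraic over ℚ if and only if every critical value of P is algebraic over ℚ. -/
/-!
A complex number is algebraic over `ℚ` exactly when every `ℚ`-derivation `D : ℂ → ℂ` kills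
it: derivations kill separable elements, and for a transcendental `x` the derivation `∂/∂x` of
`ℚ[B]`, with `B ∋ x` a transcendence basis, extends to `ℂ` because `ℂ` is formally étale over
`ℚ[B]`. So it suffices to fix `D` and compare its values on coefficients and on critical values.
Write `Q^D` for `Q` with `D` applied to its coefficients; then `D (P ζ) = P^D(ζ) + P'(ζ) D ζ`, so
`P^D = 0` forces `D` to kill every critical value. Conversely, suppose `D` kills the critical
values. If `ζ` is a root of multiplicity `m` of `P'`, then `(X - ζ)^(m+1)` divides `P - P(ζ)`,
and applying the derivation `Q ↦ Q^D` of `ℂ[X]` shows `(X - ζ)^m ∣ P^D`. Hence `P' ∣ P^D`, while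
the normalization gives `deg P^D < n - 1 = deg P'`, so `P^D = 0`.
-/

open Polynomial
open scoped Differential

section FormallyEtale

variable {R S T M : Type*} [CommRing R] [CommRing S] [CommRing T]
  [Algebra R S] [Algebra R T] [Algebra S T] [IsScalarTower R S T] [Algebra.FormallyEtale S T]
  [AddCommGroup M] [Module R M] [Module S M] [Module T M]
  [IsScalarTower R S M] [IsScalarTower R T M] [IsScalarTower S T M]

noncomputable def Derivation.liftOfFormallyEtale (d : Derivation R S M) : Derivation R T M :=
  ((d.liftKaehlerDifferential.liftBaseChange T) ∘ₗ
    (KaehlerDifferential.tensorKaehlerEquivOfFormallyEtale R S T).symm.toLinearMap).compDer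
    (KaehlerDifferential.D R T)

theorem Derivation.liftOfFormallyEtale_algebraMap (d : Derivation R S M) (s : S) :
    d.liftOfFormallyEtale (algebraMap S T s) = d s := by
  simp [Derivation.liftOfFormallyEtale,
    KaehlerDifferential.tensorKaehlerEquivOfFormallyEtale_symm_D_algebraMap]

end FormallyEtale

section Transcendental

variable {K L ι : Type*} [Field K] [Field L] [Algebra K L]

open scoped IntermediateField.algebraAdjoinAdjoin in
theorem Algebra.FormallyEtale.adjoin_of_isTranscendenceBasis [CharZero K] {v : ι → L}
    (hv : IsTranscendenceBasis K v) :
    Algebra.FormallyEtale (Algebra.adjoin K (Set.range v)) L := by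
  have : Algebra.IsAlgebraic (IntermediateField.adjoin K (Set.range v)) L := hv.isAlgebraic_field
  have : Algebra.FormallyEtale (Algebra.adjoin K (Set.range v))
      (IntermediateField.adjoin K (Set.range v)) := .of_isLocalization (nonZeroDivisors _)
  have : Algebra.FormallyEtale (IntermediateField.adjoin K (Set.range v)) L := .of_isSeparable _ _
  exact .comp _ (IntermediateField.adjoin K (Set.range v)) _

namespace AlgebraicIndependent

variable {v : ι → L} (hv : AlgebraicIndependent K v)
include hv

theorem aeval_aevalEquiv_symm (a : Algebra.adjoin K (Set.range v)) :
    MvPolynomial.aeval v (hv.aevalEquiv.symm a) = a := by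
  rw [← hv.algebraMap_aevalEquiv, AlgEquiv.apply_symm_apply]
  rfl

noncomputable def pderiv (i : ι) : Derivation K (Algebra.adjoin K (Set.range v)) L :=
  Derivation.mk' ((MvPolynomial.aeval v).toLinearMap ∘ₗ (MvPolynomial.pderiv i).toLinearMap ∘ₗ
    hv.aevalEquiv.symm.toLinearMap) fun a b => by
      simp [Derivation.leibniz, hv.aeval_aevalEquiv_symm, Subalgebra.smul_def]

theorem pderiv_apply_self (i : ι) :
    hv.pderiv i ⟨v i, Algebra.subset_adjoin (Set.mem_range_self i)⟩ = 1 := by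
  classical
  have : hv.aevalEquiv.symm ⟨v i, Algebra.subset_adjoin (Set.mem_range_self i)⟩ =
      MvPolynomial.X i := by
    rw [AlgEquiv.symm_apply_eq]
    apply Subtype.ext
    simp
  change MvPolynomial.aeval v (MvPolynomial.pderiv i (hv.aevalEquiv.symm _)) = 1
  simp [this]

end AlgebraicIndependent

theorem Derivation.exists_apply_eq_one_of_transcendental [CharZero K] {x : L}
    (hx : Transcendental K x) : ∃ D : Derivation K L L, D x = 1 := by
  obtain ⟨s, hxs, hs⟩ := exists_isTranscendenceBasis_superset (R := K) (s := {x})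
    ((algebraicIndependent_singleton_iff (⟨x, rfl⟩ : ({x} : Set L))).mpr hx)
  have := Algebra.FormallyEtale.adjoin_of_isTranscendenceBasis hs
  refine ⟨(hs.1.pderiv ⟨x, hxs rfl⟩).liftOfFormallyEtale, ?_⟩
  have := (hs.1.pderiv ⟨x, hxs rfl⟩).liftOfFormallyEtale_algebraMap (T := L)
    ⟨x, Algebra.subset_adjoin ⟨⟨x, hxs rfl⟩, rfl⟩⟩
  rwa [hs.1.pderiv_apply_self] at this

theorem Derivation.map_eq_zero_of_isSeparable {M : Type*} [AddCommGroup M] [Module L M]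
    [Module K M] [IsScalarTower K L M] (D : Derivation K L M) {a : L} (ha : IsSeparable K a) :
    D a = 0 := by
  have := D.map_aeval (minpoly K a) a
  rw [minpoly.aeval, map_zero] at this
  exact (smul_eq_zero.mp this.symm).resolve_left
    (ha.aeval_derivative_ne_zero (minpoly.aeval K a))

theorem isAlgebraic_iff_forall_derivation_eq_zero [CharZero K] {x : L} :
    IsAlgebraic K x ↔ ∀ D : Derivation K L L, D x = 0 := by
  refine ⟨fun hx D => D.map_eq_zero_of_isSeparable
    (PerfectField.separable_of_irreducible (minpoly.irreducible hx.isIntegral)), fun h => ?_⟩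
  by_contra hx
  obtain ⟨D, hD⟩ := Derivation.exists_apply_eq_one_of_transcendental hx
  exact one_ne_zero (hD.symm.trans (h D))

end Transcendental

theorem Derivation.pow_dvd_of_pow_succ_dvd {R A : Type*} [CommRing R] [CommRing A] [Algebra R A]
    (D : Derivation R A A) {a b : A} {m : ℕ} (h : a ^ (m + 1) ∣ b) : a ^ m ∣ D b := by
  obtain ⟨c, rfl⟩ := h
  rw [D.leibniz, D.leibniz_pow, smul_eq_mul, smul_eq_mul, smul_eq_mul, nsmul_eq_mul]
  simp only [add_tsub_cancel_right]
  exact dvd_add ((pow_dvd_pow a m.le_succ).mul_right _)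
    (((dvd_mul_right _ _).mul_left _).mul_left _)

theorem Polynomial.pow_rootMultiplicity_derivative_succ_dvd {F : Type*} [Field F] [CharZero F]
    (p : F[X]) (ζ : F) :
    (X - C ζ) ^ (rootMultiplicity ζ (derivative p) + 1) ∣ p - C (p.eval ζ) := by
  set q := p - C (p.eval ζ)
  have hq : q.IsRoot ζ := by simp [q]
  rcases eq_or_ne q 0 with h0 | h0
  · rw [h0]; exact dvd_zero _
  have : derivative q = derivative p := by simp [q]
  rw [← this, derivative_rootMultiplicity_of_root hq,
    Nat.sub_add_cancel ((rootMultiplicity_pos h0).mpr hq)]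
  exact pow_rootMultiplicity_dvd q ζ

namespace Differential

section CommRing

variable {A : Type*} [CommRing A] [Differential A]

theorem deriv_eval_eq (x : A) (p : A[X]) :
    (p.eval x)′ = (mapCoeffs p).eval x + (derivative p).eval x * x′ := by
  simpa only [coe_aeval_eq_eval] using deriv_aeval_eq x p

theorem deriv_eval_eq_zero_of_isRoot_derivative {p : A[X]} (hp : ∀ i, (p.coeff i)′ = 0) {ζ : A}
    (hζ : (derivative p).IsRoot ζ) : (p.eval ζ)′ = 0 := by
  have : mapCoeffs p = 0 := by ext i; simp [hp]
  rw [deriv_eval_eq, this, hζ.eq_zero, eval_zero, zero_mul, zero_add]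

theorem degree_mapCoeffs_lt {p : A[X]} (hp : p.Monic) (hnorm : p.coeff (p.natDegree - 1) = 0) :
    degree (mapCoeffs p) < ↑(p.natDegree - 1) := by
  rw [degree_lt_iff_coeff_zero]
  intro m hm
  rw [coeff_mapCoeffs]
  rcases lt_trichotomy m p.natDegree with hlt | rfl | hgt
  · rw [show m = p.natDegree - 1 by omega, hnorm, map_zero]
  · rw [hp.coeff_natDegree]; exact Derivation.map_one_eq_zero _
  · rw [coeff_eq_zero_of_natDegree_lt hgt, map_zero]

end CommRing

variable {F : Type*} [Field F] [CharZero F] [Differential F]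

theorem derivative_dvd_mapCoeffs {p : F[X]} (hs : (derivative p).Splits) (hp : derivative p ≠ 0)
    (h : ∀ ζ, (derivative p).IsRoot ζ → (p.eval ζ)′ = 0) : derivative p ∣ mapCoeffs p := by
  classical
  rcases eq_or_ne (mapCoeffs p) 0 with h0 | h0
  · rw [h0]; exact dvd_zero _
  refine hs.dvd_of_roots_le_roots hp (Multiset.le_iff_count.mpr fun ζ => ?_)
  rw [count_roots, count_roots]
  by_cases hζ : (derivative p).IsRoot ζ
  · rw [le_rootMultiplicity_iff h0]
    simpa [h ζ hζ] using
      mapCoeffs.pow_dvd_of_pow_succ_dvd (pow_rootMultiplicity_derivative_succ_dvd p ζ)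
  · rw [rootMultiplicity_eq_zero hζ]; exact Nat.zero_le _

theorem forall_deriv_coeff_eq_zero_iff [IsAlgClosed F] {p : F[X]} (hp : p.Monic)
    (hd : p.natDegree ≠ 0) (hnorm : p.coeff (p.natDegree - 1) = 0) :
    (∀ i, (p.coeff i)′ = 0) ↔ ∀ ζ, (derivative p).IsRoot ζ → (p.eval ζ)′ = 0 := by
  refine ⟨fun h ζ => deriv_eval_eq_zero_of_isRoot_derivative h, fun h i => ?_⟩
  have hdeg := degree_derivative hd
  have hp' : derivative p ≠ 0 := fun h0 => by simp [h0] at hdeg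
  have := eq_zero_of_dvd_of_degree_lt (derivative_dvd_mapCoeffs (IsAlgClosed.splits _) hp' h)
    (hdeg ▸ degree_mapCoeffs_lt hp hnorm)
  simpa using congr_arg (coeff · i) this

end Differential

/-- A normalized polynomial (monic of degree `n ≥ 1` with vanishing coefficient of
`z^(n-1)`) has all coefficients algebraic over `ℚ` if and only if all its critical
values are algebraic over `ℚ`. -/
theorem normalized_poly_algebraic_iff_critical_values_algebraic
    (n : ℕ) (hn : 1 ≤ n) (P : ℂ[X]) (hmonic : P.Monic) (hdeg : P.natDegree = n)
    (hnorm : P.coeff (n - 1) = 0) :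
    (∀ i : ℕ, IsAlgebraic ℚ (P.coeff i)) ↔
      (∀ ζ : ℂ, (derivative P).IsRoot ζ → IsAlgebraic ℚ (P.eval ζ)) := by
  have key (D : Derivation ℚ ℂ ℂ) :
      (∀ i, D (P.coeff i) = 0) ↔ ∀ ζ, (derivative P).IsRoot ζ → D (P.eval ζ) = 0 :=
    letI : Differential ℂ := ⟨D.restrictScalars ℤ⟩
    Differential.forall_deriv_coeff_eq_zero_iff hmonic (by omega) (hdeg ▸ hnorm)
  simp only [isAlgebraic_iff_forall_derivation_eq_zero]
  exact ⟨fun h ζ hζ D => (key D).1 (fun i => h i D) ζ hζ,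
    fun h i D => (key D).2 (fun ζ hζ => h ζ hζ D) i⟩
end

section
/- Let τ₁ = (1 3 6)(4 5) and τ₂ = (1 2)(3 5) be permutations in the symmetric group S₆ (written in cycle notation). Then there exists no permutation α ∈ S₆ such that α τ₁ α⁻¹ = τ₁⁻¹ and α τ₂ α⁻¹ = τ₂⁻¹. -/
open Equiv

set_option maxRecDepth 100000 in
/-- With `τ₁ = (1 3 6)(4 5)` and `τ₂ = (1 2)(3 5)` in `S₆` (here realized on
`Fin 6` with `0`-based labels), no permutation simultaneously conjugates `τ₁` to
`τ₁⁻¹` and `τ₂` to `τ₂⁻¹`. -/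
theorem no_simultaneous_inverting_conjugation :
    ¬ ∃ α : Equiv.Perm (Fin 6),
        α * (c[0, 2, 5] * c[3, 4]) * α⁻¹ = (c[0, 2, 5] * c[3, 4] : Equiv.Perm (Fin 6))⁻¹ ∧
        α * (c[0, 1] * c[2, 4]) * α⁻¹ = (c[0, 1] * c[2, 4] : Equiv.Perm (Fin 6))⁻¹ := by
  decide
end

section
/- For every integer n ≥ 1, the bivariate polynomial T_{2n}(X) + T_{2n}(Y) ∈ ℂ[X, Y] is a product of exactly n irreducible polynomials which are pairwise non-associated; in particular for n ≥ 2 it is reducible. -/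
/-!
With `x = cos a`, `y = cos b` one has `T_{2n}(x) + T_{2n}(y) = 2 cos(n(a + b)) cos(n(a - b))`, and
`T_n = 2^{n-1} ∏_k (X - c_k)` with `c_k = cos((2k + 1)π / 2n)`. Pairing the factors
`cos(a + b) - c_k` and `cos(a - b) - c_k` gives `q_{c_k}(x, y)`, where
`q_c = x² + y² - 2cxy + c² - 1`, so
`T_{2n}(x) + T_{2n}(y) = 2^{2n-1} ∏_k q_{c_k}(x, y)`. As a monic quadratic in `y` over `ℂ[x]`,
`q_c` has discriminant `4(c² - 1)(x² - 1)`, which is not a square when `c² ≠ 1`; hence `q_c` is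
irreducible, and its `xy`-coefficient recovers `c`, so the `n` factors are pairwise non-associated.
-/

open Polynomial
open scoped Polynomial.Bivariate

section Monoid

variable {ι M : Type*} [CommMonoid M] [Fintype ι]

theorem exists_associated_prod_eq_unit_mul_prod [Nonempty ι] (u : Mˣ) (g : ι → M) :
    ∃ f : ι → M, (∀ i, Associated (g i) (f i)) ∧ ∏ i, f i = u * ∏ i, g i := by
  classical
  obtain ⟨i₀⟩ := ‹Nonempty ι›
  refine ⟨Function.update g i₀ (g i₀ * u), fun i => ?_, ?_⟩
  · rcases eq_or_ne i i₀ with rfl | hi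
    · simp only [Function.update_self]
      exact ⟨u, rfl⟩
    · simp [hi]
  · rw [Finset.prod_update_of_mem (Finset.mem_univ i₀),
      Finset.prod_eq_mul_prod_sdiff_singleton_of_mem (Finset.mem_univ i₀) g]
    ac_rfl

theorem not_irreducible_prod {f : ι → M} (hf : ∀ i, ¬IsUnit (f i)) {i j : ι}
    (hij : i ≠ j) : ¬Irreducible (∏ k, f k) := by
  classical
  rw [← Finset.mul_prod_erase _ f (Finset.mem_univ i)]
  intro h
  refine (h.isUnit_or_isUnit rfl).elim (hf i) fun hu => hf j (isUnit_of_dvd_unit ?_ hu)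
  exact Finset.dvd_prod_of_mem f (Finset.mem_erase.mpr ⟨hij.symm, Finset.mem_univ j⟩)

end Monoid

section Quadric

variable {R : Type*} [CommRing R]

theorem not_isSquare_C_mul_X_sub_C_mul_X_sub_C [IsDomain R] {a r t : R} (ha : a ≠ 0)
    (hrt : r ≠ t) : ¬IsSquare (C a * ((X - C r) * (X - C t))) := by
  rintro ⟨s, hs⟩
  obtain ⟨u, rfl⟩ : X - C r ∣ s :=
    (prime_X_sub_C r).dvd_of_dvd_pow (n := 2) ⟨C a * (X - C t), by rw [sq, ← hs]; ring⟩
  have hu : (X - C r) * (u * u) = C a * (X - C t) :=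
    mul_left_cancel₀ (X_sub_C_ne_zero r) (by linear_combination -hs)
  have hr := congrArg (eval r) hu
  simp only [eval_mul, eval_sub, eval_X, eval_C, sub_self, zero_mul] at hr
  exact mul_ne_zero ha (sub_ne_zero.mpr hrt) hr.symm

theorem irreducible_X_sq_add_C_mul_X_add_C [IsDomain R] {b c : R}
    (h : ¬IsSquare (discrim 1 b c)) : Irreducible (X ^ 2 + C b * X + C c : R[X]) := by
  have hmonic : (X ^ 2 + C b * X + C c : R[X]).Monic := by monicity!
  have hdeg : (X ^ 2 + C b * X + C c : R[X]).natDegree = 2 := by compute_degree!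
  rw [hmonic.irreducible_iff_roots_eq_zero_of_degree_le_three (by omega) (by omega)]
  refine Multiset.eq_zero_of_forall_notMem fun x hx => h ⟨2 * x + b, ?_⟩
  have hx := (mem_roots hmonic.ne_zero).mp hx
  simp only [IsRoot, eval_add, eval_mul, eval_pow, eval_X, eval_C] at hx
  rw [discrim_eq_sq_of_quadratic_eq_zero (x := x) (by linear_combination hx), sq]
  ring

noncomputable def chebyshevQuadric (c : R) : MvPolynomial (Fin 2) R :=
  .X 0 ^ 2 + .X 1 ^ 2 - .C (2 * c) * .X 0 * .X 1 + .C (c ^ 2 - 1)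

theorem eval_chebyshevQuadric (v : Fin 2 → R) (c : R) :
    MvPolynomial.eval v (chebyshevQuadric c) =
      v 0 ^ 2 + v 1 ^ 2 - 2 * c * v 0 * v 1 + c ^ 2 - 1 := by
  simp only [chebyshevQuadric, map_add, map_sub, map_mul, map_pow, MvPolynomial.eval_X,
    MvPolynomial.eval_C]
  ring

theorem equivMvPolynomial_symm_chebyshevQuadric (c : R) :
    (Bivariate.equivMvPolynomial R).symm (chebyshevQuadric c) =
      Y ^ 2 + C (-(C (2 * c) * X)) * Y + C (X ^ 2 + C (c ^ 2 - 1)) := by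
  simp only [chebyshevQuadric, map_add, map_sub, map_mul, map_pow, map_neg,
    Bivariate.equivMvPolynomial_symm_X_0, Bivariate.equivMvPolynomial_symm_X_1,
    Bivariate.equivMvPolynomial_symm_C]
  ring

theorem discrim_chebyshevQuadric (c : R) :
    discrim 1 (-(C (2 * c) * X)) (X ^ 2 + C (c ^ 2 - 1)) =
      C (4 * (c ^ 2 - 1)) * ((X - C 1) * (X - C (-1))) := by
  simp only [discrim, map_mul, map_sub, map_pow, map_neg, map_one, map_ofNat]
  ring

variable [IsDomain R] [NeZero (2 : R)]

theorem irreducible_chebyshevQuadric {c : R} (hc : c ^ 2 ≠ 1) :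
    Irreducible (chebyshevQuadric c) := by
  rw [← MulEquiv.irreducible_iff (Bivariate.equivMvPolynomial R).symm,
    equivMvPolynomial_symm_chebyshevQuadric]
  refine irreducible_X_sq_add_C_mul_X_add_C ?_
  rw [discrim_chebyshevQuadric]
  refine not_isSquare_C_mul_X_sub_C_mul_X_sub_C ?_ ?_
  · exact mul_ne_zero (by simpa [show (4 : R) = 2 ^ 2 by norm_num] using two_ne_zero)
      (sub_ne_zero.mpr hc)
  · exact fun h => two_ne_zero (α := R) (by linear_combination h)

theorem eq_of_associated_chebyshevQuadric {c c' : R}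
    (h : Associated (chebyshevQuadric c) (chebyshevQuadric c')) : c = c' := by
  have hmonic (c : R) : ((Bivariate.equivMvPolynomial R).symm (chebyshevQuadric c)).Monic := by
    rw [equivMvPolynomial_symm_chebyshevQuadric]
    monicity!
  have heq := eq_of_monic_of_associated (hmonic c) (hmonic c')
    (h.map (Bivariate.equivMvPolynomial R).symm)
  rw [equivMvPolynomial_symm_chebyshevQuadric, equivMvPolynomial_symm_chebyshevQuadric] at heq
  have hcoeff := congrArg (fun p => (p.coeff 1).coeff 1) heq
  simp only [coeff_add, coeff_X_pow, coeff_C_mul_X, coeff_C] at hcoeff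
  simpa [two_ne_zero] using hcoeff

end Quadric

section Chebyshev

open Real in
noncomputable def chebyshevRoot (n k : ℕ) : ℝ := cos ((2 * k + 1) * π / (2 * n))

theorem roots_T_real_eq_map (n : ℕ) :
    (Chebyshev.T ℝ n).roots = (Finset.range n).val.map (chebyshevRoot n) := by
  rw [Chebyshev.roots_T_real, Finset.image_val]
  exact Multiset.dedup_eq_self.mpr (Chebyshev.roots_T_real_nodup n)

theorem T_real_eq_C_mul_prod (n : ℕ) :
    Chebyshev.T ℝ n =
      C (2 ^ (n - 1)) * ∏ k ∈ Finset.range n, (X - C (chebyshevRoot n k)) := by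
  have hcard : Multiset.card (Chebyshev.T ℝ n).roots = (Chebyshev.T ℝ n).natDegree := by
    simp [roots_T_real_eq_map]
  rw [← C_leadingCoeff_mul_prod_multiset_X_sub_C hcard, roots_T_real_eq_map,
    Chebyshev.leadingCoeff_T, Multiset.map_map]
  simp [Finset.prod_eq_multiset_prod]

theorem isRoot_T_chebyshevRoot {n k : ℕ} (hk : k < n) :
    (Chebyshev.T ℝ n).IsRoot (chebyshevRoot n k) := by
  have h : chebyshevRoot n k ∈ (Chebyshev.T ℝ n).roots := by
    rw [roots_T_real_eq_map]
    exact Multiset.mem_map_of_mem _ (Finset.mem_range.mpr hk)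
  exact (mem_roots'.mp h).2

theorem chebyshevRoot_injOn (n : ℕ) : Set.InjOn (chebyshevRoot n) (Set.Iio n) := by
  rw [← Finset.coe_range]
  exact (Finset.range n).nodup_map_iff_injOn.mp (Chebyshev.roots_T_real_nodup n)

/-- `T_n(±1) = (±1)^n` does not vanish. -/
theorem chebyshevRoot_sq_ne_one {n k : ℕ} (hk : k < n) : chebyshevRoot n k ^ 2 ≠ 1 := by
  have h := isRoot_T_chebyshevRoot hk
  rw [Ne, sq_eq_one_iff]
  rintro (h1 | h1) <;> simp [h1] at h

theorem Complex.cos_nat_mul_eq_prod (n : ℕ) (γ : ℂ) :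
    cos (n * γ) = 2 ^ (n - 1) * ∏ k ∈ Finset.range n, (cos γ - chebyshevRoot n k) := by
  have h := congrArg (fun p => (p.map ofRealHom).eval (cos γ)) (T_real_eq_C_mul_prod n)
  simp only [Chebyshev.map_T, Chebyshev.T_complex_cos] at h
  simpa [Polynomial.map_prod, eval_prod] using h

theorem Complex.cos_add_sub_mul_cos_sub_sub (a b c : ℂ) :
    (cos (a + b) - c) * (cos (a - b) - c) =
      cos a ^ 2 + cos b ^ 2 - 2 * c * cos a * cos b + c ^ 2 - 1 := by
  rw [cos_add, cos_sub]
  linear_combination (-sin b ^ 2) * sin_sq_add_cos_sq a - (1 - cos a ^ 2) * sin_sq_add_cos_sq b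

theorem eval_T_two_mul_add_eval_T_two_mul (n : ℕ) (x y : ℂ) :
    (Chebyshev.T ℂ ↑(2 * n)).eval x + (Chebyshev.T ℂ ↑(2 * n)).eval y =
      2 * 4 ^ (n - 1) * ∏ k ∈ Finset.range n,
        (x ^ 2 + y ^ 2 - 2 * chebyshevRoot n k * x * y + (chebyshevRoot n k : ℂ) ^ 2 - 1) := by
  obtain ⟨a, rfl⟩ := Complex.cos_surjective x
  obtain ⟨b, rfl⟩ := Complex.cos_surjective y
  have hcos : Complex.cos (2 * n * a) + Complex.cos (2 * n * b) =
      2 * Complex.cos (n * (a + b)) * Complex.cos (n * (a - b)) := by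
    rw [Complex.cos_add_cos]
    ring_nf
  simp_rw [Chebyshev.T_complex_cos, ← Complex.cos_add_sub_mul_cos_sub_sub]
  push_cast
  rw [hcos, Complex.cos_nat_mul_eq_prod, Complex.cos_nat_mul_eq_prod, Finset.prod_mul_distrib,
    show (4 : ℂ) ^ (n - 1) = (2 ^ (n - 1)) ^ 2 by rw [← pow_mul, mul_comm, pow_mul]; norm_num]
  ring

theorem aeval_T_two_mul_add_aeval_T_two_mul (n : ℕ) :
    aeval (MvPolynomial.X 0) (Chebyshev.T ℂ ↑(2 * n)) +
        aeval (MvPolynomial.X 1) (Chebyshev.T ℂ ↑(2 * n)) =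
      MvPolynomial.C (2 * 4 ^ (n - 1)) *
        ∏ k : Fin n, chebyshevQuadric (chebyshevRoot n k : ℂ) := by
  have eval_aeval_X (v : Fin 2 → ℂ) (i : Fin 2) (p : ℂ[X]) :
      MvPolynomial.eval v (aeval (MvPolynomial.X i) p) = p.eval (v i) := by
    simpa using (aeval_algHom_apply (MvPolynomial.aeval v) (MvPolynomial.X i) p).symm
  refine MvPolynomial.funext fun v => ?_
  simp only [map_add, map_mul, map_prod, eval_aeval_X, MvPolynomial.eval_C, eval_chebyshevQuadric]
  rw [eval_T_two_mul_add_eval_T_two_mul, ← Fin.prod_univ_eq_prod_range]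

end Chebyshev

/-- For every `n ≥ 1`, the bivariate polynomial `T_{2n}(X) + T_{2n}(Y) ∈ ℂ[X,Y]`
is a product of exactly `n` pairwise non-associated irreducible polynomials;
in particular for `n ≥ 2` it is not irreducible. -/
theorem chebyshev_sum_factorization (n : ℕ) (hn : 1 ≤ n) :
    ∃ f : Fin n → MvPolynomial (Fin 2) ℂ,
      (∀ i, Irreducible (f i)) ∧
      (∀ i j, i ≠ j → ¬ Associated (f i) (f j)) ∧
      (Polynomial.aeval (MvPolynomial.X 0) (Chebyshev.T ℂ ((2 * n : ℕ) : ℤ)) +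
          Polynomial.aeval (MvPolynomial.X 1) (Chebyshev.T ℂ ((2 * n : ℕ) : ℤ)) =
        ∏ i, f i) ∧
      (2 ≤ n →
        ¬ Irreducible
          (Polynomial.aeval (MvPolynomial.X 0) (Chebyshev.T ℂ ((2 * n : ℕ) : ℤ)) +
              Polynomial.aeval (MvPolynomial.X 1) (Chebyshev.T ℂ ((2 * n : ℕ) : ℤ)) :
            MvPolynomial (Fin 2) ℂ)) := by
  have : Nonempty (Fin n) := ⟨⟨0, hn⟩⟩
  have hu : IsUnit (MvPolynomial.C (2 * 4 ^ (n - 1) : ℂ) : MvPolynomial (Fin 2) ℂ) :=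
    (isUnit_iff_ne_zero.mpr (by norm_num)).map _
  obtain ⟨f, hf, hprod⟩ := exists_associated_prod_eq_unit_mul_prod hu.unit
    fun k : Fin n => chebyshevQuadric (chebyshevRoot n k : ℂ)
  have hirr (i : Fin n) : Irreducible (f i) := (hf i).irreducible
    (irreducible_chebyshevQuadric (by exact_mod_cast chebyshevRoot_sq_ne_one i.2))
  have hsum := (aeval_T_two_mul_add_aeval_T_two_mul n).trans
    (hprod.trans (by rw [hu.unit_spec])).symm
  refine ⟨f, hirr, fun i j hij hassoc => hij ?_, hsum, fun hn2 => ?_⟩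
  · exact Fin.ext (chebyshevRoot_injOn n i.2 j.2 (Complex.ofReal_injective
      (eq_of_associated_chebyshevQuadric ((hf i).trans (hassoc.trans (hf j).symm)))))
  · rw [hsum]
    exact not_irreducible_prod (fun i => (hirr i).not_isUnit) (i := ⟨0, hn⟩) (j := ⟨1, hn2⟩)
      (by simp)
end

section
/- A nontrivial finite abelian group G admits an unmixed Beauville structure if and only if there exists an integer n > 1 with gcd(n, 6) = 1 such that G is isomorphic to (ℤ/nℤ) × (ℤ/nℤ). -/
/-- `Σ(a,c)`: the set of all conjugates of all powers of `a`, `c` and `ac`. -/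
def beauvilleSigma {G : Type*} [Group G] (a c : G) : Set G :=
  ⋃ g : G, ⋃ i : ℕ, {g * a ^ i * g⁻¹, g * c ^ i * g⁻¹, g * (a * c) ^ i * g⁻¹}

/-- An unmixed Beauville structure on `G`: two generating pairs whose associated
sets `Σ` intersect trivially. -/
def IsUnmixedBeauvilleStructure {G : Type*} [Group G] (a₁ c₁ a₂ c₂ : G) : Prop :=
  Subgroup.closure {a₁, c₁} = ⊤ ∧ Subgroup.closure {a₂, c₂} = ⊤ ∧
    beauvilleSigma a₁ c₁ ∩ beauvilleSigma a₂ c₂ = {1}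

/-!
In a finite abelian group `Σ(a, c)` is the union of the cyclic subgroups `⟨a⟩`, `⟨c⟩`, `⟨ac⟩`,
so a Beauville structure is a pair of generating pairs whose three "lines" meet those of the
other pair trivially.

Let `n` be the exponent of `G`, `p ∣ n` a prime and `m = n / p`. The subgroup `Gᵐ` of `m`-th
powers is nontrivial and is generated by the `m`-th powers of either pair. It cannot lie in a
line of one pair, since then the `m`-th powers of the other pair would be trivial. Hence
`a^m` and `c^m` are nontrivial and independent. This forces `a` and `c` to have order `n` with
`⟨a⟩ ∩ ⟨c⟩ = 1`, so `G ≅ (ℤ/n)²`. For `p ≤ 3`, `Gᵐ ≅ 𝔽ₚ²` has at most four lines, too few for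
the six distinct lines of the two pairs. Conversely, `(1,0), (0,1)` and `(1,-1), (1,2)` work in
`(ℤ/n)²` for `gcd(n, 6) = 1`: all determinants involved are `±1`, `±2` or `3`.
-/

section

open Subgroup

variable {G : Type*}

section Sigma

variable [Group G]

theorem one_mem_beauvilleSigma (a c : G) : 1 ∈ beauvilleSigma a c :=
  Set.mem_iUnion₂.2 ⟨1, 0, by simp⟩

theorem image_beauvilleSigma {H : Type*} [Group H] (e : G ≃* H) (a c : G) :
    e '' beauvilleSigma a c = beauvilleSigma (e a) (e c) := by
  simp only [beauvilleSigma, Set.image_iUnion, Set.image_insert_eq, Set.image_singleton,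
    map_mul, map_pow, map_inv]
  exact e.surjective.iUnion_comp fun g =>
    ⋃ i : ℕ, {g * e a ^ i * g⁻¹, g * e c ^ i * g⁻¹, g * (e a * e c) ^ i * g⁻¹}

theorem IsUnmixedBeauvilleStructure.map {H : Type*} [Group H] {a₁ c₁ a₂ c₂ : G}
    (h : IsUnmixedBeauvilleStructure a₁ c₁ a₂ c₂) (e : G ≃* H) :
    IsUnmixedBeauvilleStructure (e a₁) (e c₁) (e a₂) (e c₂) := by
  obtain ⟨h₁, h₂, h₃⟩ := h
  have hgen {a c : G} (hac : closure {a, c} = ⊤) : closure {e a, e c} = ⊤ := by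
    have := MonoidHom.map_closure (e : G →* H) {a, c}
    rw [hac, Set.image_pair] at this
    exact this.symm.trans (map_top_of_surjective _ e.surjective)
  refine ⟨hgen h₁, hgen h₂, ?_⟩
  rw [← image_beauvilleSigma, ← image_beauvilleSigma, ← Set.image_inter e.injective, h₃,
    Set.image_singleton, map_one]

theorem IsUnmixedBeauvilleStructure.symm {a₁ c₁ a₂ c₂ : G}
    (h : IsUnmixedBeauvilleStructure a₁ c₁ a₂ c₂) : IsUnmixedBeauvilleStructure a₂ c₂ a₁ c₁ :=
  ⟨h.2.1, h.1, by rw [Set.inter_comm, h.2.2]⟩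

theorem zpowers_subset_beauvilleSigma [Finite G] {a c x : G}
    (hx : x ∈ ({a, c, a * c} : Set G)) : (zpowers x : Set G) ⊆ beauvilleSigma a c := by
  intro z hz
  obtain ⟨i, rfl⟩ := mem_powers_iff_mem_zpowers.2 hz
  refine Set.mem_iUnion₂.2 ⟨1, i, ?_⟩
  rcases hx with rfl | rfl | rfl <;> simp

theorem IsUnmixedBeauvilleStructure.disjoint_zpowers [Finite G] {a₁ c₁ a₂ c₂ x y : G}
    (h : IsUnmixedBeauvilleStructure a₁ c₁ a₂ c₂) (hx : x ∈ ({a₁, c₁, a₁ * c₁} : Set G))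
    (hy : y ∈ ({a₂, c₂, a₂ * c₂} : Set G)) : Disjoint (zpowers x) (zpowers y) := by
  refine disjoint_def.2 fun hzx hzy => ?_
  have hz := Set.mem_inter (zpowers_subset_beauvilleSigma hx hzx)
    (zpowers_subset_beauvilleSigma hy hzy)
  rwa [h.2.2] at hz

end Sigma

theorem exists_mem_zpowers_of_mem_beauvilleSigma [CommGroup G] {a c z : G}
    (hz : z ∈ beauvilleSigma a c) : ∃ x ∈ ({a, c, a * c} : Set G), z ∈ zpowers x := by
  obtain ⟨g, i, hz⟩ := Set.mem_iUnion₂.1 hz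
  simp only [mul_inv_cancel_comm, Set.mem_insert_iff, Set.mem_singleton_iff] at hz
  rcases hz with rfl | rfl | rfl
  exacts [⟨a, by simp, npow_mem_zpowers a i⟩, ⟨c, by simp, npow_mem_zpowers c i⟩,
    ⟨a * c, by simp, npow_mem_zpowers _ i⟩]

theorem isUnmixedBeauvilleStructure_iff [CommGroup G] [Finite G] {a₁ c₁ a₂ c₂ : G} :
    IsUnmixedBeauvilleStructure a₁ c₁ a₂ c₂ ↔
      closure {a₁, c₁} = ⊤ ∧ closure {a₂, c₂} = ⊤ ∧
        ∀ x ∈ ({a₁, c₁, a₁ * c₁} : Set G), ∀ y ∈ ({a₂, c₂, a₂ * c₂} : Set G),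
          Disjoint (zpowers x) (zpowers y) := by
  refine ⟨fun h => ⟨h.1, h.2.1, fun x hx y hy => h.disjoint_zpowers hx hy⟩,
    fun ⟨h₁, h₂, hdisj⟩ => ⟨h₁, h₂, ?_⟩⟩
  refine Set.eq_singleton_iff_unique_mem.2 ⟨?_, fun z ⟨hz₁, hz₂⟩ => ?_⟩
  · exact ⟨one_mem_beauvilleSigma a₁ c₁, one_mem_beauvilleSigma a₂ c₂⟩
  · obtain ⟨x, hx, hzx⟩ := exists_mem_zpowers_of_mem_beauvilleSigma hz₁
    obtain ⟨y, hy, hzy⟩ := exists_mem_zpowers_of_mem_beauvilleSigma hz₂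
    exact disjoint_def.1 (hdisj x hx y hy) hzx hzy

section Cyclic

theorem zpow_eq_one_of_dvd [Group G] {p : ℕ} {t : G} (ht : t ^ p = 1) {k : ℤ}
    (hk : (p : ℤ) ∣ k) : t ^ k = 1 := by
  obtain ⟨j, rfl⟩ := hk
  rw [zpow_mul, zpow_natCast, ht, one_zpow]

theorem mem_zpowers_of_mem_zpowers_of_pow_prime_eq_one [Group G] {p : ℕ} (hp : p.Prime)
    {t w : G} (ht : t ^ p = 1) (hw : w ∈ zpowers t) (hw₁ : w ≠ 1) : t ∈ zpowers w := by
  obtain ⟨k, rfl⟩ := hw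
  have : Fact p.Prime := ⟨hp⟩
  have ht₁ : t ≠ 1 := by rintro rfl; simp at hw₁
  rw [mem_zpowers_zpow_iff, orderOf_eq_prime ht ht₁]
  rcases (Nat.dvd_prime hp).1 (Int.natCast_dvd_natCast.1 (Int.gcd_dvd_right k p)) with hg | hg
  · exact hg
  · refine absurd (zpow_eq_one_of_dvd ht ?_) hw₁
    simpa [hg] using Int.gcd_dvd_left k p

theorem mem_zpowers_pow_orderOf_div [Group G] {p : ℕ} (hp : 0 < p) {a w : G}
    (hpa : p ∣ orderOf a) (hw : w ∈ zpowers a) (hwp : w ^ p = 1) :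
    w ∈ zpowers (a ^ (orderOf a / p)) := by
  obtain ⟨k, rfl⟩ := hw
  have hdvd : ((orderOf a / p : ℕ) : ℤ) * p ∣ k * p := by
    rw [← Nat.cast_mul, Nat.div_mul_cancel hpa, orderOf_dvd_iff_zpow_eq_one, zpow_mul,
      zpow_natCast, hwp]
  obtain ⟨j, hj⟩ := Int.dvd_of_mul_dvd_mul_right (by exact_mod_cast hp.ne') hdvd
  exact ⟨j, by simp only [← zpow_natCast, ← zpow_mul, ← hj]⟩

theorem disjoint_zpowers_of_forall_prime [Group G] [Finite G] {a c : G} {n : ℕ}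
    (ha : orderOf a = n) (hc : orderOf c = n)
    (h : ∀ p, p.Prime → p ∣ n → c ^ (n / p) ∉ zpowers (a ^ (n / p))) :
    Disjoint (zpowers a) (zpowers c) := by
  subst ha
  refine disjoint_def.2 fun {z} hza hzc => by_contra fun hz => ?_
  obtain ⟨p, hp, hpz⟩ := Nat.exists_prime_and_dvd (mt orderOf_eq_one_iff.1 hz)
  set w := z ^ (orderOf z / p)
  have hw : orderOf w = p :=
    orderOf_pow_orderOf_div (isOfFinOrder_of_finite z).orderOf_pos.ne' hpz
  have hwp : w ^ p = 1 := hw ▸ pow_orderOf_eq_one w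
  have hw₁ : w ≠ 1 := fun h => hp.ne_one (by rw [← hw, h, orderOf_one])
  have hpa : p ∣ orderOf a := hpz.trans (orderOf_dvd_of_mem_zpowers hza)
  have hpc : p ∣ orderOf c := hpz.trans (orderOf_dvd_of_mem_zpowers hzc)
  have hwa := mem_zpowers_pow_orderOf_div hp.pos hpa (pow_mem hza _) hwp
  have hwc := mem_zpowers_pow_orderOf_div hp.pos hpc (pow_mem hzc _) hwp
  have hcp : (c ^ (orderOf c / p)) ^ p = 1 := by
    rw [← pow_mul, Nat.div_mul_cancel hpc, pow_orderOf_eq_one]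
  rw [hc] at hwc hcp
  exact h p hp hpa (zpowers_le.2 hwa
    (mem_zpowers_of_mem_zpowers_of_pow_prime_eq_one hp hcp hwc hw₁))

/-- For `p ≤ 3` the four lines `⟨u⟩, ⟨v⟩, ⟨uv⟩, ⟨uv⁻¹⟩` exhaust the `p + 1` lines of `𝔽ₚ²`. -/
theorem mem_zpowers_of_mem_closure_pair [CommGroup G] {p : ℕ} (hp : p = 2 ∨ p = 3) {u v z : G}
    (hu : u ^ p = 1) (hv : v ^ p = 1) (hz : z ∈ closure {u, v}) :
    z ∈ zpowers u ∨ z ∈ zpowers v ∨ z ∈ zpowers (u * v) ∨ z ∈ zpowers (u * v⁻¹) := by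
  obtain ⟨i, j, rfl⟩ := mem_closure_pair.1 hz
  have : (p : ℤ) ∣ i ∨ (p : ℤ) ∣ j ∨ (p : ℤ) ∣ i - j ∨ (p : ℤ) ∣ i + j := by
    have key : ∀ x y : ZMod p, x = 0 ∨ y = 0 ∨ x - y = 0 ∨ x + y = 0 := by
      rcases hp with rfl | rfl <;> decide
    simpa only [← ZMod.intCast_zmod_eq_zero_iff_dvd, Int.cast_sub, Int.cast_add] using key i j
  rcases this with h | h | h | h
  · exact Or.inr (Or.inl ⟨j, by simp [zpow_eq_one_of_dvd hu h]⟩)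
  · exact Or.inl ⟨i, by simp [zpow_eq_one_of_dvd hv h]⟩
  · have hij : u ^ i = u ^ j := by
      rw [← sub_add_cancel i j, zpow_add, zpow_eq_one_of_dvd hu h, one_mul]
    exact Or.inr (Or.inr (Or.inl ⟨j, by simp only [hij, mul_zpow]⟩))
  · have hij : v ^ j = v⁻¹ ^ i := by
      rw [inv_zpow', ← one_mul (v ^ (-i)), ← zpow_eq_one_of_dvd hv h, ← zpow_add,
        add_neg_cancel_comm]
    exact Or.inr (Or.inr (Or.inr ⟨i, by simp only [hij, mul_zpow]⟩))

theorem exists_injective_zmod_range_eq_zpowers [Group G] {x : G} {n : ℕ} (hx : orderOf x = n) :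
    ∃ f : Multiplicative (ZMod n) →* G, Function.Injective f ∧ f.range = zpowers x := by
  have e : Multiplicative (ZMod n) ≃* zpowers x :=
    zmodMulEquivOfGenerator (g := ⟨x, mem_zpowers x⟩)
      (fun ⟨_, k, hk⟩ => ⟨k, Subtype.ext hk⟩) ((Nat.card_zpowers x).trans hx)
  refine ⟨(zpowers x).subtype.comp e.toMonoidHom,
    (zpowers x).subtype_injective.comp e.injective, ?_⟩
  rw [MonoidHom.range_comp, MonoidHom.range_eq_top_of_surjective _ e.surjective,
    ← MonoidHom.range_eq_map, range_subtype]

theorem nonempty_mulEquiv_zmod_prod [CommGroup G] {a c : G} {n : ℕ}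
    (hgen : closure {a, c} = ⊤) (ha : orderOf a = n) (hc : orderOf c = n)
    (hdisj : Disjoint (zpowers a) (zpowers c)) :
    Nonempty (G ≃* Multiplicative (ZMod n × ZMod n)) := by
  obtain ⟨f, hf, hfr⟩ := exists_injective_zmod_range_eq_zpowers ha
  obtain ⟨g, hg, hgr⟩ := exists_injective_zmod_range_eq_zpowers hc
  let φ := f.noncommCoprod g fun _ _ => Commute.all _ _
  have hinj : Function.Injective φ :=
    (MonoidHom.noncommCoprod_injective f g _).2 ⟨hf, hg, hfr ▸ hgr ▸ hdisj⟩
  have hsurj : Function.Surjective φ := by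
    rw [← MonoidHom.range_eq_top, MonoidHom.noncommCoprod_range, hfr, hgr, ← hgen,
      zpowers_eq_closure, zpowers_eq_closure, ← Subgroup.closure_union, Set.singleton_union]
  exact ⟨(MulEquiv.ofBijective φ ⟨hinj, hsurj⟩).symm.trans (MulEquiv.prodMultiplicative _ _).symm⟩

end Cyclic

theorem Nat.not_dvd_div_of_prime_dvd {n p : ℕ} (hn : n ≠ 0) (hp : p.Prime) (hpn : p ∣ n) :
    ¬ n ∣ n / p :=
  Nat.not_dvd_of_pos_of_lt (Nat.div_pos (Nat.le_of_dvd (Nat.pos_of_ne_zero hn) hpn) hp.pos)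
    (Nat.div_lt_self (Nat.pos_of_ne_zero hn) hp.one_lt)

theorem range_powMonoidHom_eq_closure [CommGroup G] {a c : G} (h : closure {a, c} = ⊤)
    (m : ℕ) : (powMonoidHom m : G →* G).range = closure {a ^ m, c ^ m} := by
  rw [MonoidHom.range_eq_map, ← h, MonoidHom.map_closure, Set.image_pair]
  rfl

section Forward

variable [CommGroup G] [Finite G] {a₁ c₁ a₂ c₂ : G}

theorem IsUnmixedBeauvilleStructure.exponent_dvd_of_closure_pow_le_zpowers
    (h : IsUnmixedBeauvilleStructure a₁ c₁ a₂ c₂) {x : G} (hx : x ∈ ({a₁, c₁, a₁ * c₁} : Set G))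
    {m : ℕ} (hle : closure {a₁ ^ m, c₁ ^ m} ≤ zpowers x) : Monoid.exponent G ∣ m := by
  have hpow {y : G} (hy : y ∈ ({a₂, c₂, a₂ * c₂} : Set G))
      (hym : y ^ m ∈ closure {a₂ ^ m, c₂ ^ m}) : y ^ m = 1 := by
    rw [← range_powMonoidHom_eq_closure h.2.1, range_powMonoidHom_eq_closure h.1] at hym
    exact disjoint_def.1 (h.disjoint_zpowers hx hy) (hle hym) (npow_mem_zpowers y m)
  suffices (powMonoidHom m : G →* G) = 1 from
    Monoid.exponent_dvd_of_forall_pow_eq_one fun g => DFunLike.congr_fun this g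
  refine MonoidHom.eq_of_eqOn_dense h.2.1 ?_
  rintro y (rfl | rfl)
  · exact hpow (by simp) (subset_closure (by simp))
  · exact hpow (by simp) (subset_closure (by simp))

theorem IsUnmixedBeauvilleStructure.pow_exponent_div_ne_one
    (h : IsUnmixedBeauvilleStructure a₁ c₁ a₂ c₂) {p : ℕ} (hp : p.Prime)
    (hpn : p ∣ Monoid.exponent G) : a₁ ^ (Monoid.exponent G / p) ≠ 1 := by
  intro ha
  refine Nat.not_dvd_div_of_prime_dvd Monoid.exponent_ne_zero_of_finite hp hpn
    (h.exponent_dvd_of_closure_pow_le_zpowers (x := c₁) (by simp) ?_)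
  rw [ha, closure_le]
  rintro y (rfl | rfl)
  exacts [one_mem _, npow_mem_zpowers c₁ _]

theorem IsUnmixedBeauvilleStructure.pow_exponent_div_not_mem_zpowers
    (h : IsUnmixedBeauvilleStructure a₁ c₁ a₂ c₂) {p : ℕ} (hp : p.Prime)
    (hpn : p ∣ Monoid.exponent G) :
    c₁ ^ (Monoid.exponent G / p) ∉ zpowers (a₁ ^ (Monoid.exponent G / p)) := by
  intro hc
  refine Nat.not_dvd_div_of_prime_dvd Monoid.exponent_ne_zero_of_finite hp hpn
    (h.exponent_dvd_of_closure_pow_le_zpowers (x := a₁) (by simp) ?_)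
  rw [closure_le]
  rintro y (rfl | rfl)
  exacts [npow_mem_zpowers a₁ _, zpowers_le.2 (npow_mem_zpowers a₁ _) hc]

theorem IsUnmixedBeauvilleStructure.not_dvd_exponent
    (h : IsUnmixedBeauvilleStructure a₁ c₁ a₂ c₂) {p : ℕ} (hp23 : p = 2 ∨ p = 3) :
    ¬ p ∣ Monoid.exponent G := by
  intro hpn
  have hp : p.Prime := by rcases hp23 with rfl | rfl <;> norm_num
  set m := Monoid.exponent G / p
  have hpow (g : G) : (g ^ m) ^ p = 1 := by
    rw [← pow_mul, Nat.div_mul_cancel hpn, Monoid.pow_exponent_eq_one]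
  -- The `m`-th powers of the second pair avoid three of the four lines of the first pair.
  have hmem {y : G} (hy : y ∈ ({a₂, c₂, a₂ * c₂} : Set G)) (hy₁ : y ^ m ≠ 1) :
      y ^ m ∈ zpowers (a₁ ^ m * (c₁ ^ m)⁻¹) := by
    have hyc : y ^ m ∈ closure {a₁ ^ m, c₁ ^ m} := by
      rw [← range_powMonoidHom_eq_closure h.1]
      exact ⟨y, rfl⟩
    have hout {x : G} (hx : x ∈ ({a₁, c₁, a₁ * c₁} : Set G)) : y ^ m ∉ zpowers (x ^ m) :=
      fun hyx => hy₁ (disjoint_def.1 (h.disjoint_zpowers hx hy)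
        (zpowers_le.2 (npow_mem_zpowers x m) hyx) (npow_mem_zpowers y m))
    rcases mem_zpowers_of_mem_closure_pair hp23 (hpow a₁) (hpow c₁) hyc with hu | hv | huv | ht
    · exact absurd hu (hout (x := a₁) (by simp))
    · exact absurd hv (hout (x := c₁) (by simp))
    · exact absurd (mul_pow a₁ c₁ m ▸ huv) (hout (x := a₁ * c₁) (by simp))
    · exact ht
  have ha₂ := h.symm.pow_exponent_div_ne_one hp hpn
  have hc₂ := h.symm.pow_exponent_div_not_mem_zpowers hp hpn
  refine hc₂ (zpowers_le.2 ?_ (hmem (by simp) fun hc => hc₂ (hc ▸ one_mem _)))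
  refine mem_zpowers_of_mem_zpowers_of_pow_prime_eq_one hp ?_ (hmem (by simp) ha₂) ha₂
  rw [mul_pow, inv_pow, hpow, hpow, inv_one, mul_one]

theorem IsUnmixedBeauvilleStructure.coprime_exponent_six
    (h : IsUnmixedBeauvilleStructure a₁ c₁ a₂ c₂) : (Monoid.exponent G).Coprime 6 := by
  refine Nat.coprime_of_dvd fun p hp hpn hp6 => h.not_dvd_exponent ?_ hpn
  rcases (Nat.Prime.dvd_mul hp).1 (show p ∣ 2 * 3 from hp6) with h2 | h3
  · exact Or.inl ((Nat.prime_dvd_prime_iff_eq hp Nat.prime_two).1 h2)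
  · exact Or.inr ((Nat.prime_dvd_prime_iff_eq hp Nat.prime_three).1 h3)

theorem IsUnmixedBeauvilleStructure.nonempty_mulEquiv_zmod_exponent
    (h : IsUnmixedBeauvilleStructure a₁ c₁ a₂ c₂) :
    Nonempty (G ≃* Multiplicative (ZMod (Monoid.exponent G) × ZMod (Monoid.exponent G))) := by
  have hord (x : G)
      (hx : ∀ p, p.Prime → p ∣ Monoid.exponent G → x ^ (Monoid.exponent G / p) ≠ 1) :
      orderOf x = Monoid.exponent G :=
    orderOf_eq_of_pow_and_pow_div_prime (Nat.pos_of_ne_zero Monoid.exponent_ne_zero_of_finite)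
      (Monoid.pow_exponent_eq_one x) hx
  have hc₁ p hp hpn := h.pow_exponent_div_not_mem_zpowers (p := p) hp hpn
  have ha := hord a₁ fun p hp hpn => h.pow_exponent_div_ne_one hp hpn
  have hc := hord c₁ fun p hp hpn hc => hc₁ p hp hpn (by rw [hc]; exact one_mem _)
  exact nonempty_mulEquiv_zmod_prod h.1 ha hc (disjoint_zpowers_of_forall_prime ha hc hc₁)

end Forward

section Backward

variable {R : Type*} [CommRing R] {v w : R × R}

theorem eq_zero_of_smul_eq_smul (h : IsUnit (v.1 * w.2 - v.2 * w.1)) {s t : R}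
    (hst : s • v = t • w) : s = 0 := by
  have h₁ : s * v.1 = t * w.1 := congrArg Prod.fst hst
  have h₂ : s * v.2 = t * w.2 := congrArg Prod.snd hst
  exact h.mul_left_eq_zero.1 (by linear_combination w.2 * h₁ - w.1 * h₂)

theorem exists_smul_add_smul_eq (h : IsUnit (v.1 * w.2 - v.2 * w.1)) (x : R × R) :
    ∃ s t : R, s • v + t • w = x := by
  obtain ⟨d, hd⟩ := h.exists_right_inv
  refine ⟨(x.1 * w.2 - x.2 * w.1) * d, (v.1 * x.2 - v.2 * x.1) * d, Prod.ext ?_ ?_⟩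
  · simp only [Prod.fst_add, Prod.smul_fst, smul_eq_mul]
    linear_combination x.1 * hd
  · simp only [Prod.snd_add, Prod.smul_snd, smul_eq_mul]
    linear_combination x.2 * hd

theorem disjoint_zpowers_ofAdd (h : IsUnit (v.1 * w.2 - v.2 * w.1)) :
    Disjoint (zpowers (Multiplicative.ofAdd v)) (zpowers (Multiplicative.ofAdd w)) := by
  rw [disjoint_def]
  rintro - ⟨k, rfl⟩ ⟨l, hl⟩
  have hkl : (k : R) • v = (l : R) • w := by
    simpa [← ofAdd_zsmul, Int.cast_smul_eq_zsmul] using hl.symm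
  simp [← ofAdd_zsmul, ← Int.cast_smul_eq_zsmul R, eq_zero_of_smul_eq_smul h hkl]

theorem closure_ofAdd_pair_eq_top {n : ℕ} {v w : ZMod n × ZMod n}
    (h : IsUnit (v.1 * w.2 - v.2 * w.1)) :
    Subgroup.closure {Multiplicative.ofAdd v, Multiplicative.ofAdd w} = ⊤ := by
  refine (eq_top_iff' _).2 fun x => mem_closure_pair.2 ?_
  obtain ⟨s, t, hst⟩ := exists_smul_add_smul_eq h x.toAdd
  refine ⟨s.cast, t.cast, ?_⟩
  rw [← ofAdd_zsmul, ← ofAdd_zsmul, ← ofAdd_add, ← Int.cast_smul_eq_zsmul (ZMod n),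
    ← Int.cast_smul_eq_zsmul (ZMod n), ZMod.intCast_zmod_cast, ZMod.intCast_zmod_cast, hst]
  rfl

theorem isUnmixedBeauvilleStructure_zmod_prod {n : ℕ} [NeZero n] (hn : n.Coprime 6) :
    IsUnmixedBeauvilleStructure (Multiplicative.ofAdd ((1, 0) : ZMod n × ZMod n))
      (Multiplicative.ofAdd (0, 1)) (Multiplicative.ofAdd (1, -1))
      (Multiplicative.ofAdd (1, 2)) := by
  have h6 : IsUnit (6 : ZMod n) := by
    exact_mod_cast (ZMod.isUnit_iff_coprime 6 n).2 hn.symm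
  have h2 : IsUnit (2 : ZMod n) := isUnit_of_dvd_unit (Dvd.intro 3 (by norm_num)) h6
  have h3 : IsUnit (3 : ZMod n) := isUnit_of_dvd_unit (Dvd.intro 2 (by norm_num)) h6
  refine isUnmixedBeauvilleStructure_iff.2 ⟨closure_ofAdd_pair_eq_top (by simp),
    closure_ofAdd_pair_eq_top (by norm_num [h3]), ?_⟩
  simp only [Set.mem_insert_iff, Set.mem_singleton_iff, forall_eq_or_imp, forall_eq,
    ← ofAdd_add]
  refine ⟨⟨?_, ?_, ?_⟩, ⟨?_, ?_, ?_⟩, ⟨?_, ?_, ?_⟩⟩ <;>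
    exact disjoint_zpowers_ofAdd (by norm_num [h2])

end Backward

end

/-- A nontrivial finite abelian group admits an unmixed Beauville structure iff it
is isomorphic to `(ℤ/n)²` for some `n > 1` coprime to `6`. -/
theorem abelian_unmixedBeauville_iff {G : Type*} [CommGroup G] [Finite G] [Nontrivial G] :
    (∃ a₁ c₁ a₂ c₂ : G, IsUnmixedBeauvilleStructure a₁ c₁ a₂ c₂) ↔
      ∃ n : ℕ, 1 < n ∧ Nat.gcd n 6 = 1 ∧
        Nonempty (G ≃* Multiplicative (ZMod n × ZMod n)) := by
  constructor
  · rintro ⟨a₁, c₁, a₂, c₂, h⟩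
    exact ⟨Monoid.exponent G, Monoid.one_lt_exponent, h.coprime_exponent_six,
      h.nonempty_mulEquiv_zmod_exponent⟩
  · rintro ⟨n, hn, hn6, ⟨e⟩⟩
    have : NeZero n := ⟨by omega⟩
    exact ⟨_, _, _, _, (isUnmixedBeauvilleStructure_zmod_prod hn6).map e.symm⟩
end

section
/- Let n ≥ 7 be an integer and p an odd prime with p + 3 ≤ n. In the symmetric group S_n set a := (1, p+2, p+1)(2, p+3) and c := (1, 2, …, p)(p+1, p+2, …, n) (products of the indicated disjoint cycles). Then: (1) there is no automorphism of S_n sending a to a⁻¹ and c to c⁻¹; (2) a and c generate S_n. -/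
set_option maxHeartbeats 1000000
open Equiv List Equiv.Perm

private theorem fne {n : ℕ} {u v : ℕ} {hu : u < n} {hv : v < n} (h : u ≠ v) :
    (⟨u, hu⟩ : Fin n) ≠ ⟨v, hv⟩ := by simp [Fin.ext_iff]; omega

private theorem swap_fix {n : ℕ} (u v q : ℕ) (hu : u < n) (hv : v < n) (hq : q < n)
    (h1 : q ≠ u) (h2 : q ≠ v) : Equiv.swap (⟨u, hu⟩ : Fin n) ⟨v, hv⟩ ⟨q, hq⟩ = ⟨q, hq⟩ :=
  Equiv.swap_apply_of_ne_of_ne (fne h1) (fne h2)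

private def myC (n p : ℕ) : Equiv.Perm (Fin n) :=
  List.formPerm ((List.finRange n).take p) *
    List.formPerm ((List.finRange n).drop p)

private def myA (n p : ℕ) (hpn : p + 3 ≤ n) : Equiv.Perm (Fin n) :=
  List.formPerm [⟨0, Nat.lt_of_lt_of_le (by omega) hpn⟩, ⟨p + 1, Nat.lt_of_lt_of_le (by omega) hpn⟩,
    ⟨p, Nat.lt_of_lt_of_le (by omega) hpn⟩] *
    Equiv.swap ⟨1, Nat.lt_of_lt_of_le (by omega) hpn⟩ ⟨p + 2, Nat.lt_of_lt_of_le (by omega) hpn⟩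

private theorem myA_eq (n p : ℕ) (hpn : p + 3 ≤ n) :
    myA n p hpn = Equiv.swap ⟨0, Nat.lt_of_lt_of_le (by omega) hpn⟩ ⟨p + 1, Nat.lt_of_lt_of_le (by omega) hpn⟩ *
      Equiv.swap ⟨p + 1, Nat.lt_of_lt_of_le (by omega) hpn⟩ ⟨p, Nat.lt_of_lt_of_le (by omega) hpn⟩ *
      Equiv.swap ⟨1, Nat.lt_of_lt_of_le (by omega) hpn⟩ ⟨p + 2, Nat.lt_of_lt_of_le (by omega) hpn⟩ := by
  unfold myA
  rw [List.formPerm_cons_cons, List.formPerm_pair]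

private theorem take_nodup (n p : ℕ) : ((List.finRange n).take p).Nodup :=
  (List.take_sublist _ _).nodup (List.nodup_finRange n)

private theorem drop_nodup (n p : ℕ) : ((List.finRange n).drop p).Nodup :=
  (List.drop_sublist _ _).nodup (List.nodup_finRange n)

private theorem getElem_take' (n p i : ℕ) (h : i < ((List.finRange n).take p).length)
    (h2 : i < n) : ((List.finRange n).take p)[i] = ⟨i, h2⟩ := by
  simp [List.getElem_take]

private theorem getElem_drop' (n p i : ℕ) (h : i < ((List.finRange n).drop p).length)
    (h2 : p + i < n) : ((List.finRange n).drop p)[i] = ⟨p + i, h2⟩ := by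
  simp [List.getElem_drop]

private theorem not_mem_take (n p : ℕ) (x : Fin n) (hx : p ≤ x.val) :
    x ∉ (List.finRange n).take p := by
  intro h
  obtain ⟨j, hj, hEq⟩ := List.mem_iff_getElem.mp h
  have hj' : j < p := by have := hj; simp at this; omega
  rw [getElem_take' n p j hj (by omega)] at hEq
  rw [← hEq] at hx; simp at hx; omega

private theorem not_mem_drop (n p : ℕ) (x : Fin n) (hx : x.val < p) :
    x ∉ (List.finRange n).drop p := by
  intro h
  obtain ⟨j, hj, hEq⟩ := List.mem_iff_getElem.mp h
  have hj' : p + j < n := by have := hj; simp at this; omega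
  rw [getElem_drop' n p j hj hj'] at hEq
  rw [← hEq] at hx; simp at hx

private theorem tlen (n p : ℕ) (h : p ≤ n) : ((List.finRange n).take p).length = p := by
  simp; omega

private theorem dlen (n p : ℕ) : ((List.finRange n).drop p).length = n - p := by simp

private theorem c_lt (n p i : ℕ) (hpn : p + 3 ≤ n) (hi : i + 1 < p) (h1 : i < n)
    (h2 : i + 1 < n) : myC n p ⟨i, h1⟩ = ⟨i + 1, h2⟩ := by
  have key := List.formPerm_apply_getElem _ (take_nodup n p) i
    (by rw [tlen n p (by omega)]; omega)
  simp only [tlen n p (by omega)] at key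
  simp only [Nat.mod_eq_of_lt (show i + 1 < p by omega)] at key
  rw [getElem_take' n p i _ h1, getElem_take' n p (i+1) _ h2] at key
  have key2 : List.formPerm ((List.finRange n).take p) ⟨i, h1⟩ = (⟨i + 1, h2⟩ : Fin n) := key
  unfold myC
  rw [Equiv.Perm.mul_apply,
    List.formPerm_apply_of_notMem (not_mem_drop n p ⟨i, h1⟩ (by simp; omega)), key2]

private theorem c_top (n p : ℕ) (hp : 2 ≤ p) (hpn : p + 3 ≤ n) (h1 : p - 1 < n) (h2 : 0 < n) :
    myC n p ⟨p - 1, h1⟩ = ⟨0, h2⟩ := by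
  have key := List.formPerm_apply_getElem _ (take_nodup n p) (p - 1)
    (by rw [tlen n p (by omega)]; omega)
  simp only [tlen n p (by omega)] at key
  simp only [show p - 1 + 1 = p from by omega, Nat.mod_self] at key
  rw [getElem_take' n p (p-1) _ h1, getElem_take' n p 0 _ h2] at key
  have key2 : List.formPerm ((List.finRange n).take p) ⟨p - 1, h1⟩ = (⟨0, h2⟩ : Fin n) := key
  unfold myC
  rw [Equiv.Perm.mul_apply,
    List.formPerm_apply_of_notMem (not_mem_drop n p ⟨p - 1, h1⟩ (by simp; omega)), key2]

private theorem c_mid (n p i : ℕ) (hpn : p + 3 ≤ n) (hi : p ≤ i) (hi2 : i + 1 < n)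
    (h1 : i < n) : myC n p ⟨i, h1⟩ = ⟨i + 1, hi2⟩ := by
  have key := List.formPerm_apply_getElem _ (drop_nodup n p) (i - p)
    (by rw [dlen]; omega)
  simp only [dlen] at key
  simp only [Nat.mod_eq_of_lt (show i - p + 1 < n - p by omega)] at key
  rw [getElem_drop' n p (i - p) _ (by omega), getElem_drop' n p (i - p + 1) _ (by omega)] at key
  simp only [show p + (i - p) = i from by omega, show p + (i - p + 1) = i + 1 from by omega] at key
  have key2 : List.formPerm ((List.finRange n).drop p) ⟨i, h1⟩ = (⟨i + 1, hi2⟩ : Fin n) := key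
  unfold myC
  rw [Equiv.Perm.mul_apply, key2,
    List.formPerm_apply_of_notMem (not_mem_take n p ⟨i + 1, hi2⟩ (by simp; omega))]

private theorem c_last (n p : ℕ) (hpn : p + 3 ≤ n) (h1 : n - 1 < n) (h2 : p < n) :
    myC n p ⟨n - 1, h1⟩ = ⟨p, h2⟩ := by
  have key := List.formPerm_apply_getElem _ (drop_nodup n p) (n - 1 - p)
    (by rw [dlen]; omega)
  simp only [dlen] at key
  simp only [show n - 1 - p + 1 = n - p from by omega, Nat.mod_self] at key
  rw [getElem_drop' n p (n - 1 - p) _ (by omega), getElem_drop' n p 0 _ (by omega)] at key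
  simp only [show p + (n - 1 - p) = n - 1 from by omega, Nat.add_zero] at key
  have key2 : List.formPerm ((List.finRange n).drop p) ⟨n - 1, h1⟩ = (⟨p, h2⟩ : Fin n) := key
  unfold myC
  rw [Equiv.Perm.mul_apply, key2,
    List.formPerm_apply_of_notMem (not_mem_take n p ⟨p, h2⟩ (by simp))]

section
variable {n p : ℕ}

private theorem a_0 (hp : 3 ≤ p) (hpn : p + 3 ≤ n) (h1 : 0 < n) (h2 : p + 1 < n) :
    myA n p hpn ⟨0, h1⟩ = ⟨p + 1, h2⟩ := by
  have b1 : 1 < n := by omega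
  have b2 : p + 2 < n := by omega
  have b3 : p < n := by omega
  rw [myA_eq]
  simp only [Equiv.Perm.mul_apply]
  rw [show Equiv.swap (⟨1, b1⟩ : Fin n) ⟨p + 2, b2⟩ ⟨0, h1⟩ = ⟨0, h1⟩ from
      swap_fix _ _ _ _ _ _ (by omega) (by omega),
    show Equiv.swap (⟨p + 1, h2⟩ : Fin n) ⟨p, b3⟩ ⟨0, h1⟩ = ⟨0, h1⟩ from
      swap_fix _ _ _ _ _ _ (by omega) (by omega),
    show Equiv.swap (⟨0, h1⟩ : Fin n) ⟨p + 1, h2⟩ ⟨0, h1⟩ = ⟨p + 1, h2⟩ from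
      Equiv.swap_apply_left _ _]

private theorem a_1 (hp : 3 ≤ p) (hpn : p + 3 ≤ n) (h1 : 1 < n) (h2 : p + 2 < n) :
    myA n p hpn ⟨1, h1⟩ = ⟨p + 2, h2⟩ := by
  have b1 : 0 < n := by omega
  have b2 : p + 1 < n := by omega
  have b3 : p < n := by omega
  rw [myA_eq]
  simp only [Equiv.Perm.mul_apply]
  rw [show Equiv.swap (⟨1, h1⟩ : Fin n) ⟨p + 2, h2⟩ ⟨1, h1⟩ = ⟨p + 2, h2⟩ from
      Equiv.swap_apply_left _ _,
    show Equiv.swap (⟨p + 1, b2⟩ : Fin n) ⟨p, b3⟩ ⟨p + 2, h2⟩ = ⟨p + 2, h2⟩ from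
      swap_fix _ _ _ _ _ _ (by omega) (by omega),
    show Equiv.swap (⟨0, b1⟩ : Fin n) ⟨p + 1, b2⟩ ⟨p + 2, h2⟩ = ⟨p + 2, h2⟩ from
      swap_fix _ _ _ _ _ _ (by omega) (by omega)]

private theorem a_p (hp : 3 ≤ p) (hpn : p + 3 ≤ n) (h1 : p < n) (h2 : 0 < n) :
    myA n p hpn ⟨p, h1⟩ = ⟨0, h2⟩ := by
  have b1 : 1 < n := by omega
  have b2 : p + 2 < n := by omega
  have b3 : p + 1 < n := by omega
  rw [myA_eq]
  simp only [Equiv.Perm.mul_apply]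
  rw [show Equiv.swap (⟨1, b1⟩ : Fin n) ⟨p + 2, b2⟩ ⟨p, h1⟩ = ⟨p, h1⟩ from
      swap_fix _ _ _ _ _ _ (by omega) (by omega),
    show Equiv.swap (⟨p + 1, b3⟩ : Fin n) ⟨p, h1⟩ ⟨p, h1⟩ = ⟨p + 1, b3⟩ from
      Equiv.swap_apply_right _ _,
    show Equiv.swap (⟨0, h2⟩ : Fin n) ⟨p + 1, b3⟩ ⟨p + 1, b3⟩ = ⟨0, h2⟩ from
      Equiv.swap_apply_right _ _]

private theorem a_p1 (hp : 3 ≤ p) (hpn : p + 3 ≤ n) (h1 : p + 1 < n) (h2 : p < n) :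
    myA n p hpn ⟨p + 1, h1⟩ = ⟨p, h2⟩ := by
  have b1 : 1 < n := by omega
  have b2 : p + 2 < n := by omega
  have b3 : 0 < n := by omega
  rw [myA_eq]
  simp only [Equiv.Perm.mul_apply]
  rw [show Equiv.swap (⟨1, b1⟩ : Fin n) ⟨p + 2, b2⟩ ⟨p + 1, h1⟩ = ⟨p + 1, h1⟩ from
      swap_fix _ _ _ _ _ _ (by omega) (by omega),
    show Equiv.swap (⟨p + 1, h1⟩ : Fin n) ⟨p, h2⟩ ⟨p + 1, h1⟩ = ⟨p, h2⟩ from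
      Equiv.swap_apply_left _ _,
    show Equiv.swap (⟨0, b3⟩ : Fin n) ⟨p + 1, h1⟩ ⟨p, h2⟩ = ⟨p, h2⟩ from
      swap_fix _ _ _ _ _ _ (by omega) (by omega)]

private theorem a_p2 (hp : 3 ≤ p) (hpn : p + 3 ≤ n) (h1 : p + 2 < n) (h2 : 1 < n) :
    myA n p hpn ⟨p + 2, h1⟩ = ⟨1, h2⟩ := by
  have b1 : 0 < n := by omega
  have b2 : p + 1 < n := by omega
  have b3 : p < n := by omega
  rw [myA_eq]
  simp only [Equiv.Perm.mul_apply]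
  rw [show Equiv.swap (⟨1, h2⟩ : Fin n) ⟨p + 2, h1⟩ ⟨p + 2, h1⟩ = ⟨1, h2⟩ from
      Equiv.swap_apply_right _ _,
    show Equiv.swap (⟨p + 1, b2⟩ : Fin n) ⟨p, b3⟩ ⟨1, h2⟩ = ⟨1, h2⟩ from
      swap_fix _ _ _ _ _ _ (by omega) (by omega),
    show Equiv.swap (⟨0, b1⟩ : Fin n) ⟨p + 1, b2⟩ ⟨1, h2⟩ = ⟨1, h2⟩ from
      swap_fix _ _ _ _ _ _ (by omega) (by omega)]

private theorem a_fix (hp : 3 ≤ p) (hpn : p + 3 ≤ n) (q : ℕ) (hq : q < n) (e0 : q ≠ 0)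
    (e1 : q ≠ 1) (e2 : q ≠ p) (e3 : q ≠ p + 1) (e4 : q ≠ p + 2) :
    myA n p hpn ⟨q, hq⟩ = ⟨q, hq⟩ := by
  have b1 : 1 < n := by omega
  have b2 : p + 2 < n := by omega
  have b3 : p + 1 < n := by omega
  have b4 : p < n := by omega
  have b5 : 0 < n := by omega
  rw [myA_eq]
  simp only [Equiv.Perm.mul_apply]
  rw [show Equiv.swap (⟨1, b1⟩ : Fin n) ⟨p + 2, b2⟩ ⟨q, hq⟩ = ⟨q, hq⟩ from
      swap_fix _ _ _ _ _ _ (by omega) (by omega),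
    show Equiv.swap (⟨p + 1, b3⟩ : Fin n) ⟨p, b4⟩ ⟨q, hq⟩ = ⟨q, hq⟩ from
      swap_fix _ _ _ _ _ _ (by omega) (by omega),
    show Equiv.swap (⟨0, b5⟩ : Fin n) ⟨p + 1, b3⟩ ⟨q, hq⟩ = ⟨q, hq⟩ from
      swap_fix _ _ _ _ _ _ (by omega) (by omega)]

end

private theorem inv_eval {α : Type*} (f : Equiv.Perm α) (x y : α) (h : f x = y) :
    f⁻¹ y = x := by rw [← h]; simp

private theorem part1 (n p : ℕ) (hp : 3 ≤ p) (hpn : p + 3 ≤ n)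
    (A C : Equiv.Perm (Fin n)) (hA : A = myA n p hpn) (hC : C = myC n p) :
    ¬ ∃ φ : MulAut (Equiv.Perm (Fin n)), φ A = A⁻¹ ∧ φ C = C⁻¹ := by
  rintro ⟨φ, hfa, hfc⟩
  have b0 : 0 < n := by omega
  have b1 : 1 < n := by omega
  have b2 : 2 < n := by omega
  have bpm1 : p - 1 < n := by omega
  have bp : p < n := by omega
  have bp1 : p + 1 < n := by omega
  have bp2 : p + 2 < n := by omega
  have bn1 : n - 1 < n := by omega
  -- A values
  have hA0 : A ⟨0, b0⟩ = ⟨p + 1, bp1⟩ := by rw [hA]; exact a_0 hp hpn b0 bp1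
  have hA1 : A ⟨1, b1⟩ = ⟨p + 2, bp2⟩ := by rw [hA]; exact a_1 hp hpn b1 bp2
  have hAp : A ⟨p, bp⟩ = ⟨0, b0⟩ := by rw [hA]; exact a_p hp hpn bp b0
  have hAp1 : A ⟨p + 1, bp1⟩ = ⟨p, bp⟩ := by rw [hA]; exact a_p1 hp hpn bp1 bp
  have hAp2 : A ⟨p + 2, bp2⟩ = ⟨1, b1⟩ := by rw [hA]; exact a_p2 hp hpn bp2 b1
  have hAfix : ∀ (q : ℕ) (hq : q < n), q ≠ 0 → q ≠ 1 → q ≠ p → q ≠ p + 1 → q ≠ p + 2 →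
      A ⟨q, hq⟩ = ⟨q, hq⟩ := by
    intro q hq e0 e1 e2 e3 e4; rw [hA]; exact a_fix hp hpn q hq e0 e1 e2 e3 e4
  -- A⁻¹ values
  have iA0 : A⁻¹ ⟨0, b0⟩ = ⟨p, bp⟩ := inv_eval _ _ _ hAp
  have iAp : A⁻¹ ⟨p, bp⟩ = ⟨p + 1, bp1⟩ := inv_eval _ _ _ hAp1
  have iAp1 : A⁻¹ ⟨p + 1, bp1⟩ = ⟨0, b0⟩ := inv_eval _ _ _ hA0
  have iA1 : A⁻¹ ⟨1, b1⟩ = ⟨p + 2, bp2⟩ := inv_eval _ _ _ hAp2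
  have iAp2 : A⁻¹ ⟨p + 2, bp2⟩ = ⟨1, b1⟩ := inv_eval _ _ _ hA1
  -- C values
  have hC0 : C ⟨0, b0⟩ = ⟨1, b1⟩ := by rw [hC]; exact c_lt n p 0 hpn (by omega) b0 b1
  have hC1 : C ⟨1, b1⟩ = ⟨2, b2⟩ := by rw [hC]; exact c_lt n p 1 hpn (by omega) b1 b2
  have hCpm1 : C ⟨p - 1, bpm1⟩ = ⟨0, b0⟩ := by rw [hC]; exact c_top n p (by omega) hpn bpm1 b0
  have hCp : C ⟨p, bp⟩ = ⟨p + 1, bp1⟩ := by rw [hC]; exact c_mid n p p hpn le_rfl bp1 bp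
  have hCp1 : C ⟨p + 1, bp1⟩ = ⟨p + 2, bp2⟩ := by
    rw [hC]; exact c_mid n p (p + 1) hpn (by omega) bp2 bp1
  have hClast : C ⟨n - 1, bn1⟩ = ⟨p, bp⟩ := by rw [hC]; exact c_last n p hpn bn1 bp
  -- C⁻¹ values
  have iC1 : C⁻¹ ⟨1, b1⟩ = ⟨0, b0⟩ := inv_eval _ _ _ hC0
  have iC2 : C⁻¹ ⟨2, b2⟩ = ⟨1, b1⟩ := inv_eval _ _ _ hC1
  have iC0 : C⁻¹ ⟨0, b0⟩ = ⟨p - 1, bpm1⟩ := inv_eval _ _ _ hCpm1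
  have iCp1 : C⁻¹ ⟨p + 1, bp1⟩ = ⟨p, bp⟩ := inv_eval _ _ _ hCp
  have iCp2 : C⁻¹ ⟨p + 2, bp2⟩ = ⟨p + 1, bp1⟩ := inv_eval _ _ _ hCp1
  have iCp : C⁻¹ ⟨p, bp⟩ = ⟨n - 1, bn1⟩ := inv_eval _ _ _ hClast
  -- the element x = C⁻¹ A C A²  (apply A² first)
  have hx0 : (C⁻¹ * (A * (C * (A * A)))) ⟨0, b0⟩ = ⟨n - 1, bn1⟩ := by
    simp only [Equiv.Perm.mul_apply]
    rw [hA0, hAp1, hCp, hAp1, iCp]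
  have hxn1 : (C⁻¹ * (A * (C * (A * A)))) ⟨n - 1, bn1⟩ = ⟨p - 1, bpm1⟩ := by
    simp only [Equiv.Perm.mul_apply]
    rcases eq_or_lt_of_le hpn with hcase | hcase
    · have e : (⟨n - 1, bn1⟩ : Fin n) = ⟨p + 2, bp2⟩ := by
        apply Fin.ext; simp; omega
      rw [e, hAp2, hA1, ← e, hClast, hAp, iC0]
    · rw [hAfix (n-1) bn1 (by omega) (by omega) (by omega) (by omega) (by omega),
        hAfix (n-1) bn1 (by omega) (by omega) (by omega) (by omega) (by omega),
        hClast, hAp, iC0]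
  have hxpm1 : (C⁻¹ * (A * (C * (A * A)))) ⟨p - 1, bpm1⟩ = ⟨p, bp⟩ := by
    simp only [Equiv.Perm.mul_apply]
    rw [hAfix (p-1) bpm1 (by omega) (by omega) (by omega) (by omega) (by omega),
      hAfix (p-1) bpm1 (by omega) (by omega) (by omega) (by omega) (by omega),
      hCpm1, hA0, iCp1]
  have hxp : (C⁻¹ * (A * (C * (A * A)))) ⟨p, bp⟩ = ⟨0, b0⟩ := by
    simp only [Equiv.Perm.mul_apply]
    rw [hAp, hA0, hCp1, hAp2, iC1]
  have hxp1 : (C⁻¹ * (A * (C * (A * A)))) ⟨p + 1, bp1⟩ = ⟨p + 1, bp1⟩ := by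
    simp only [Equiv.Perm.mul_apply]
    rw [hAp1, hAp, hC0, hA1, iCp2]
  have hxgen : ∀ (q : ℕ) (hq : q < n), q ≠ 0 → q ≠ p - 1 → q ≠ p → q ≠ p + 1 → q ≠ n - 1 →
      (C⁻¹ * (A * (C * (A * A)))) ⟨q, hq⟩ = ⟨q, hq⟩ := by
    intro q hq e0 e1 e2 e3 e4
    simp only [Equiv.Perm.mul_apply]
    by_cases hq1 : q = 1
    · subst hq1
      rw [hA1, hAp2, hC1,
        hAfix 2 b2 (by omega) (by omega) (by omega) (by omega) (by omega), iC2]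
    · by_cases hq2 : q = p + 2
      · subst hq2
        have hb3 : p + 3 < n := by omega
        have hCp2 : C ⟨p + 2, bp2⟩ = ⟨p + 3, hb3⟩ := by
          rw [hC]; exact c_mid n p (p + 2) hpn (by omega) hb3 bp2
        rw [hAp2, hA1, hCp2,
          hAfix (p+3) hb3 (by omega) (by omega) (by omega) (by omega) (by omega),
          inv_eval _ _ _ hCp2]
      · have hq' : q + 1 < n := by omega
        have hcq : C ⟨q, hq⟩ = ⟨q + 1, hq'⟩ := by
          rcases lt_or_ge q p with h | h
          · rw [hC]; exact c_lt n p q hpn (by omega) hq hq'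
          · rw [hC]; exact c_mid n p q hpn (by omega) hq' hq
        rw [hAfix q hq (by omega) (by omega) (by omega) (by omega) (by omega),
          hAfix q hq (by omega) (by omega) (by omega) (by omega) (by omega),
          hcq,
          hAfix (q+1) hq' (by omega) (by omega) (by omega) (by omega) (by omega),
          inv_eval _ _ _ hcq]
  have pow4 : ∀ (g : Equiv.Perm (Fin n)) (z : Fin n), (g ^ 4) z = g (g (g (g z))) := by
    intro g z
    rw [pow_succ, pow_succ, pow_succ, pow_one]
    rfl
  have hx4 : (C⁻¹ * (A * (C * (A * A)))) ^ 4 = 1 := by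
    ext q
    obtain ⟨qv, hqv⟩ := q
    rw [pow4, Equiv.Perm.one_apply]
    by_cases e0 : qv = 0
    · subst e0; rw [hx0, hxn1, hxpm1, hxp]
    · by_cases e1 : qv = p - 1
      · subst e1; rw [hxpm1, hxp, hx0, hxn1]
      · by_cases e2 : qv = p
        · subst e2; rw [hxp, hx0, hxn1, hxpm1]
        · by_cases e3 : qv = p + 1
          · subst e3; rw [hxp1, hxp1, hxp1, hxp1]
          · by_cases e4 : qv = n - 1
            · subst e4; rw [hxn1, hxpm1, hxp, hx0]
            · simp only [hxgen qv hqv e0 e1 e2 e3 e4]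
  -- push through φ
  have him : φ (C⁻¹ * (A * (C * (A * A)))) = C * (A⁻¹ * (C⁻¹ * (A⁻¹ * A⁻¹))) := by
    simp only [map_mul, map_inv, hfa, hfc, inv_inv]
  have hy4 : (C * (A⁻¹ * (C⁻¹ * (A⁻¹ * A⁻¹)))) ^ 4 = 1 := by
    rw [← him, ← map_pow, hx4, map_one]
  -- evaluate y^4 at 0
  have hy0 : (C * (A⁻¹ * (C⁻¹ * (A⁻¹ * A⁻¹)))) ⟨0, b0⟩ = ⟨p + 2, bp2⟩ := by
    simp only [Equiv.Perm.mul_apply]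
    rw [iA0, iAp, iCp1, iAp, hCp1]
  have hyp2 : (C * (A⁻¹ * (C⁻¹ * (A⁻¹ * A⁻¹)))) ⟨p + 2, bp2⟩ = ⟨1, b1⟩ := by
    simp only [Equiv.Perm.mul_apply]
    rw [iAp2, iA1, iCp2, iAp1, hC0]
  have hy1 : (C * (A⁻¹ * (C⁻¹ * (A⁻¹ * A⁻¹)))) ⟨1, b1⟩ = ⟨p + 1, bp1⟩ := by
    simp only [Equiv.Perm.mul_apply]
    rw [iA1, iAp2, iC1, iA0, hCp]
  have key : ((C * (A⁻¹ * (C⁻¹ * (A⁻¹ * A⁻¹)))) ^ 4) ⟨0, b0⟩ = ⟨0, b0⟩ := by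
    rw [hy4]; rfl
  rw [pow4, hy0, hyp2, hy1] at key
  -- last application: y (p+1)
  simp only [Equiv.Perm.mul_apply] at key
  rw [iAp1, iA0, iCp] at key
  rcases eq_or_lt_of_le hpn with hcase | hcase
  · have e : (⟨n - 1, bn1⟩ : Fin n) = ⟨p + 2, bp2⟩ := by apply Fin.ext; simp; omega
    rw [e, iAp2, hC1] at key
    simp [Fin.mk.injEq] at key
  · rw [show A⁻¹ ⟨n - 1, bn1⟩ = ⟨n - 1, bn1⟩ from
      inv_eval _ _ _ (hAfix (n-1) bn1 (by omega) (by omega) (by omega) (by omega) (by omega)),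
      hClast] at key
    simp [Fin.mk.injEq] at key
    omega

private theorem part2 (n p : ℕ) (hp : 3 ≤ p) (hpn : p + 3 ≤ n)
    (A C : Equiv.Perm (Fin n)) (hA : A = myA n p hpn) (hC : C = myC n p) :
    Subgroup.closure {A, C} = ⊤ := by
  have b0 : 0 < n := by omega
  have b1 : 1 < n := by omega
  have bp : p < n := by omega
  have bp1 : p + 1 < n := by omega
  have bp2 : p + 2 < n := by omega
  have haS : A ∈ Subgroup.closure {A, C} := Subgroup.subset_closure (Set.mem_insert _ _)
  have hcS : C ∈ Subgroup.closure {A, C} :=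
    Subgroup.subset_closure (Set.mem_insert_of_mem _ rfl)
  have hAeq : A = (Equiv.swap (⟨0, b0⟩ : Fin n) ⟨p + 1, bp1⟩ *
      Equiv.swap (⟨p + 1, bp1⟩ : Fin n) ⟨p, bp⟩) * Equiv.swap (⟨1, b1⟩ : Fin n) ⟨p + 2, bp2⟩ := by
    rw [hA]; exact myA_eq n p hpn
  -- B ^ 3 = 1
  have hBform : List.formPerm [(⟨0, b0⟩ : Fin n), ⟨p + 1, bp1⟩, ⟨p, bp⟩] =
      Equiv.swap (⟨0, b0⟩ : Fin n) ⟨p + 1, bp1⟩ * Equiv.swap (⟨p + 1, bp1⟩ : Fin n) ⟨p, bp⟩ := by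
    rw [List.formPerm_cons_cons, List.formPerm_pair]
  have hnd : List.Nodup [(⟨0, b0⟩ : Fin n), ⟨p + 1, bp1⟩, ⟨p, bp⟩] := by
    refine List.nodup_cons.mpr ⟨?_, List.nodup_cons.mpr ⟨?_, List.nodup_singleton _⟩⟩ <;>
      · simp [Fin.ext_iff]
        try omega
  have hB3 : (Equiv.swap (⟨0, b0⟩ : Fin n) ⟨p + 1, bp1⟩ *
      Equiv.swap (⟨p + 1, bp1⟩ : Fin n) ⟨p, bp⟩) ^ 3 = 1 := by
    have h3 := List.formPerm_pow_length_eq_one_of_nodup _ hnd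
    simp only [List.length_cons, List.length_nil] at h3
    rw [← hBform]
    exact h3
  have hT2 : Equiv.swap (⟨1, b1⟩ : Fin n) ⟨p + 2, bp2⟩ *
      Equiv.swap (⟨1, b1⟩ : Fin n) ⟨p + 2, bp2⟩ = 1 := Equiv.swap_mul_self _ _
  -- B and T commute (disjoint supports)
  have hBT : Commute (Equiv.swap (⟨0, b0⟩ : Fin n) ⟨p + 1, bp1⟩ *
      Equiv.swap (⟨p + 1, bp1⟩ : Fin n) ⟨p, bp⟩)
      (Equiv.swap (⟨1, b1⟩ : Fin n) ⟨p + 2, bp2⟩) := by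
    apply Equiv.Perm.Disjoint.commute
    intro x
    obtain ⟨q, hq⟩ := x
    by_cases h1 : q = 1 ∨ q = p + 2
    · left
      simp only [Equiv.Perm.mul_apply]
      rw [show Equiv.swap (⟨p + 1, bp1⟩ : Fin n) ⟨p, bp⟩ ⟨q, hq⟩ = ⟨q, hq⟩ from
          swap_fix _ _ _ _ _ _ (by omega) (by omega),
        show Equiv.swap (⟨0, b0⟩ : Fin n) ⟨p + 1, bp1⟩ ⟨q, hq⟩ = ⟨q, hq⟩ from
          swap_fix _ _ _ _ _ _ (by omega) (by omega)]
    · right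
      exact swap_fix _ _ _ _ _ _ (by omega) (by omega)
  -- T = A ^ 3 ∈ S
  have hA3 : A ^ 3 = Equiv.swap (⟨1, b1⟩ : Fin n) ⟨p + 2, bp2⟩ := by
    rw [hAeq, hBT.mul_pow, hB3, one_mul, pow_succ, pow_two, hT2, one_mul]
  have hTmem : Equiv.swap (⟨1, b1⟩ : Fin n) ⟨p + 2, bp2⟩ ∈ Subgroup.closure {A, C} :=
    hA3 ▸ pow_mem haS 3
  -- B = A * T ∈ S
  have hBeq : A * Equiv.swap (⟨1, b1⟩ : Fin n) ⟨p + 2, bp2⟩ =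
      Equiv.swap (⟨0, b0⟩ : Fin n) ⟨p + 1, bp1⟩ * Equiv.swap (⟨p + 1, bp1⟩ : Fin n) ⟨p, bp⟩ := by
    rw [hAeq, mul_assoc, hT2, mul_one]
  have hBmem : Equiv.swap (⟨0, b0⟩ : Fin n) ⟨p + 1, bp1⟩ *
      Equiv.swap (⟨p + 1, bp1⟩ : Fin n) ⟨p, bp⟩ ∈ Subgroup.closure {A, C} :=
    hBeq ▸ mul_mem haS hTmem
  -- B evaluations
  have hB0 : (Equiv.swap (⟨0, b0⟩ : Fin n) ⟨p + 1, bp1⟩ *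
      Equiv.swap (⟨p + 1, bp1⟩ : Fin n) ⟨p, bp⟩) ⟨0, b0⟩ = ⟨p + 1, bp1⟩ := by
    simp only [Equiv.Perm.mul_apply]
    rw [show Equiv.swap (⟨p + 1, bp1⟩ : Fin n) ⟨p, bp⟩ ⟨0, b0⟩ = ⟨0, b0⟩ from
        swap_fix _ _ _ _ _ _ (by omega) (by omega)]
    exact Equiv.swap_apply_left _ _
  have hBp1 : (Equiv.swap (⟨0, b0⟩ : Fin n) ⟨p + 1, bp1⟩ *
      Equiv.swap (⟨p + 1, bp1⟩ : Fin n) ⟨p, bp⟩) ⟨p + 1, bp1⟩ = ⟨p, bp⟩ := by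
    simp only [Equiv.Perm.mul_apply]
    rw [show Equiv.swap (⟨p + 1, bp1⟩ : Fin n) ⟨p, bp⟩ ⟨p + 1, bp1⟩ = ⟨p, bp⟩ from
        Equiv.swap_apply_left _ _]
    exact swap_fix _ _ _ _ _ _ (by omega) (by omega)
  have hBp : (Equiv.swap (⟨0, b0⟩ : Fin n) ⟨p + 1, bp1⟩ *
      Equiv.swap (⟨p + 1, bp1⟩ : Fin n) ⟨p, bp⟩) ⟨p, bp⟩ = ⟨0, b0⟩ := by
    simp only [Equiv.Perm.mul_apply]
    rw [show Equiv.swap (⟨p + 1, bp1⟩ : Fin n) ⟨p, bp⟩ ⟨p, bp⟩ = ⟨p + 1, bp1⟩ from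
        Equiv.swap_apply_right _ _]
    exact Equiv.swap_apply_right _ _
  have hBfix : ∀ (q : ℕ) (hq : q < n), q ≠ 0 → q ≠ p → q ≠ p + 1 →
      (Equiv.swap (⟨0, b0⟩ : Fin n) ⟨p + 1, bp1⟩ *
        Equiv.swap (⟨p + 1, bp1⟩ : Fin n) ⟨p, bp⟩) ⟨q, hq⟩ = ⟨q, hq⟩ := by
    intro q hq e0 e1 e2
    simp only [Equiv.Perm.mul_apply]
    rw [show Equiv.swap (⟨p + 1, bp1⟩ : Fin n) ⟨p, bp⟩ ⟨q, hq⟩ = ⟨q, hq⟩ from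
        swap_fix _ _ _ _ _ _ (by omega) (by omega)]
    exact swap_fix _ _ _ _ _ _ (by omega) (by omega)
  -- conjugation helpers
  have swapS : ∀ (u : Equiv.Perm (Fin n)), u ∈ Subgroup.closure {A, C} → ∀ x y : Fin n,
      Equiv.swap x y ∈ Subgroup.closure {A, C} →
      Equiv.swap (u x) (u y) ∈ Subgroup.closure {A, C} := by
    intro u hu x y hxy
    rw [Equiv.swap_apply_apply]
    exact mul_mem (mul_mem hu hxy) (inv_mem hu)
  have hcongr : ∀ (u v u' v' : ℕ) (hu : u < n) (hv : v < n) (hu' : u' < n) (hv' : v' < n),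
      u = u' → v = v' → Equiv.swap (⟨u', hu'⟩ : Fin n) ⟨v', hv'⟩ ∈ Subgroup.closure {A, C} →
      Equiv.swap (⟨u, hu⟩ : Fin n) ⟨v, hv⟩ ∈ Subgroup.closure {A, C} := by
    intro u v u' v' hu hv hu' hv' h1 h2 hm
    subst h1; subst h2; exact hm
  have c_b2 : ∀ (w : ℕ) (h1 : p ≤ w) (h2 : w < n), ∃ (w' : ℕ) (h3 : w' < n), p ≤ w' ∧
      C ⟨w, h2⟩ = ⟨w', h3⟩ := by
    intro w h1 h2
    rcases lt_or_ge (w + 1) n with h | h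
    · exact ⟨w + 1, h, by omega, by rw [hC]; exact c_mid n p w hpn h1 h h2⟩
    · have hw : w = n - 1 := by omega
      subst hw
      exact ⟨p, bp, le_rfl, by rw [hC]; exact c_last n p hpn h2 bp⟩
  -- walk the first block
  have Q : ∀ j, 1 ≤ j → j + 1 ≤ p → ∃ (w : ℕ) (hw : w < n) (hj : j < n), p ≤ w ∧
      Equiv.swap (⟨j, hj⟩ : Fin n) ⟨w, hw⟩ ∈ Subgroup.closure {A, C} := by
    intro j hj1
    induction j, hj1 using Nat.le_induction with
    | base => intro _; exact ⟨p + 2, bp2, b1, by omega, hTmem⟩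
    | succ j hj ih =>
      intro hjp
      obtain ⟨w, hw, hjn, hwp, hm⟩ := ih (by omega)
      have step := swapS C hcS _ _ hm
      obtain ⟨w', hw', hw'p, hcw⟩ := c_b2 w hwp hw
      rw [hcw, show C ⟨j, hjn⟩ = ⟨j + 1, by omega⟩ from by
        rw [hC]; exact c_lt n p j hpn (by omega) _ _] at step
      exact ⟨w', hw', by omega, hw'p, step⟩
  -- get a swap (0, w)
  obtain ⟨w, hw, hjn, hwp, hm0⟩ := Q (p - 1) (by omega) (by omega)
  have step0 := swapS C hcS _ _ hm0
  obtain ⟨w', hw', hw'p, hcw⟩ := c_b2 w hwp hw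
  rw [hcw, show C ⟨p - 1, hjn⟩ = ⟨0, b0⟩ from by
    rw [hC]; exact c_top n p (by omega) hpn _ _] at step0
  -- step0 : swap ⟨0⟩ ⟨w'⟩ ∈ S, p ≤ w' < n
  -- C2a : swap (0, p+1) ∈ S
  have C2a : Equiv.swap (⟨0, b0⟩ : Fin n) ⟨p + 1, bp1⟩ ∈ Subgroup.closure {A, C} := by
    by_cases hc1 : w' = p
    · have hsw : Equiv.swap (⟨0, b0⟩ : Fin n) ⟨p, bp⟩ ∈ Subgroup.closure {A, C} :=
        hcongr _ _ _ _ _ _ _ _ rfl hc1.symm step0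
      have step2 := swapS _ hBmem _ _ hsw
      rw [hB0, hBp] at step2
      rw [Equiv.swap_comm] at step2
      exact step2
    · by_cases hc2 : w' = p + 1
      · exact hcongr _ _ _ _ _ _ _ _ rfl hc2.symm step0
      · have step2 := swapS _ hBmem _ _ step0
        rw [hB0, hBfix w' hw' (by omega) (by omega) (by omega)] at step2
        have step3 := swapS _ step2 _ _ step0
        rw [show Equiv.swap (⟨p + 1, bp1⟩ : Fin n) ⟨w', hw'⟩ ⟨0, b0⟩ = ⟨0, b0⟩ from
            swap_fix _ _ _ _ _ _ (by omega) (by omega),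
          show Equiv.swap (⟨p + 1, bp1⟩ : Fin n) ⟨w', hw'⟩ ⟨w', hw'⟩ = ⟨p + 1, bp1⟩ from
            Equiv.swap_apply_right _ _] at step3
        exact step3
  -- C2b : swap (p, p+1) ∈ S
  have C2b : Equiv.swap (⟨p, bp⟩ : Fin n) ⟨p + 1, bp1⟩ ∈ Subgroup.closure {A, C} := by
    have step := swapS _ hBmem _ _ C2a
    rw [hB0, hBp1] at step
    rw [Equiv.swap_comm] at step
    exact step
  -- adjacent swaps in the second block
  have Adj2 : ∀ j (h : p + j + 1 < n),
      Equiv.swap (⟨p + j, by omega⟩ : Fin n) ⟨p + j + 1, h⟩ ∈ Subgroup.closure {A, C} := by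
    intro j
    induction j with
    | zero => intro h; exact hcongr _ _ _ _ _ _ _ _ (by omega) (by omega) C2b
    | succ j ih =>
      intro h
      have prev := ih (by omega)
      have step := swapS C hcS _ _ prev
      rw [show C ⟨p + j, by omega⟩ = ⟨p + j + 1, by omega⟩ from by
          rw [hC]; exact c_mid n p (p + j) hpn (by omega) (by omega) (by omega),
        show C ⟨p + j + 1, by omega⟩ = ⟨p + j + 2, by omega⟩ from by
          rw [hC]; exact c_mid n p (p + j + 1) hpn (by omega) (by omega) (by omega)] at step
      exact hcongr _ _ _ _ _ _ _ _ (by omega) (by omega) step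
  -- general second block swaps
  have F2' : ∀ d i (hi : p ≤ i) (h : i + 1 + d < n),
      Equiv.swap (⟨i, by omega⟩ : Fin n) ⟨i + 1 + d, h⟩ ∈ Subgroup.closure {A, C} := by
    intro d
    induction d with
    | zero =>
      intro i hi h
      exact hcongr _ _ _ _ _ _ (by omega) (by omega) (by omega) (by omega)
        (Adj2 (i - p) (by omega))
    | succ d ih =>
      intro i hi h
      have prev := ih i hi (by omega)
      have adj : Equiv.swap (⟨i + 1 + d, by omega⟩ : Fin n) ⟨i + 1 + d + 1, by omega⟩ ∈
          Subgroup.closure {A, C} :=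
        hcongr _ _ _ _ _ _ (by omega) (by omega) (by omega) (by omega)
          (Adj2 (i + 1 + d - p) (by omega))
      have step := swapS _ adj _ _ prev
      rw [show Equiv.swap (⟨i + 1 + d, by omega⟩ : Fin n) ⟨i + 1 + d + 1, by omega⟩
            ⟨i, by omega⟩ = ⟨i, by omega⟩ from
          swap_fix _ _ _ _ _ _ (by omega) (by omega),
        show Equiv.swap (⟨i + 1 + d, by omega⟩ : Fin n) ⟨i + 1 + d + 1, by omega⟩
            ⟨i + 1 + d, by omega⟩ = ⟨i + 1 + d + 1, by omega⟩ from
          Equiv.swap_apply_left _ _] at step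
      exact hcongr _ _ _ _ _ _ _ _ rfl (by omega) step
  have F2s : ∀ i j (hi : p ≤ i) (hj : p ≤ j) (hne : i ≠ j) (h1 : i < n) (h2 : j < n),
      Equiv.swap (⟨i, h1⟩ : Fin n) ⟨j, h2⟩ ∈ Subgroup.closure {A, C} := by
    intro i j hi hj hne h1 h2
    rcases lt_or_gt_of_ne hne with h | h
    · exact hcongr _ _ _ _ _ _ (by omega) (by omega) rfl (by omega) (F2' (j - i - 1) i hi (by omega))
    · rw [Equiv.swap_comm]
      exact hcongr _ _ _ _ _ _ (by omega) (by omega) rfl (by omega) (F2' (i - j - 1) j hj (by omega))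
  -- cross swaps
  have E : ∀ i, i + 1 ≤ p → ∃ (v : ℕ) (hv : v < n) (hi' : i < n), p ≤ v ∧
      Equiv.swap (⟨i, hi'⟩ : Fin n) ⟨v, hv⟩ ∈ Subgroup.closure {A, C} := by
    intro i
    induction i with
    | zero => intro _; exact ⟨p + 1, bp1, b0, by omega, C2a⟩
    | succ i ih =>
      intro h
      obtain ⟨v, hv, hi', hvp, hm⟩ := ih (by omega)
      have step := swapS C hcS _ _ hm
      obtain ⟨v', hv', hv'p, hcv⟩ := c_b2 v hvp hv
      rw [hcv, show C ⟨i, hi'⟩ = ⟨i + 1, by omega⟩ from by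
        rw [hC]; exact c_lt n p i hpn (by omega) _ _] at step
      exact ⟨v', hv', by omega, hv'p, step⟩
  have F3 : ∀ i y (hip : i < p) (hyp : p ≤ y) (h1 : i < n) (h2 : y < n),
      Equiv.swap (⟨i, h1⟩ : Fin n) ⟨y, h2⟩ ∈ Subgroup.closure {A, C} := by
    intro i y hip hyp h1 h2
    obtain ⟨v, hv, hi', hvp, hm⟩ := E i hip
    by_cases hvy : v = y
    · exact hcongr i y i v h1 h2 hi' hv rfl hvy.symm hm
    · have hu : Equiv.swap (⟨v, hv⟩ : Fin n) ⟨y, h2⟩ ∈ Subgroup.closure {A, C} :=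
        F2s v y hvp hyp hvy hv h2
      have step := swapS _ hu _ _ hm
      rw [show Equiv.swap (⟨v, hv⟩ : Fin n) ⟨y, h2⟩ ⟨i, hi'⟩ = ⟨i, hi'⟩ from
          swap_fix _ _ _ _ _ _ (by omega) (by omega),
        show Equiv.swap (⟨v, hv⟩ : Fin n) ⟨y, h2⟩ ⟨v, hv⟩ = ⟨y, h2⟩ from
          Equiv.swap_apply_left _ _] at step
      exact hcongr i y i y h1 h2 hi' h2 rfl rfl step
  have F1 : ∀ i j (hij : i < j) (hjp : j < p) (h1 : i < n) (h2 : j < n),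
      Equiv.swap (⟨i, h1⟩ : Fin n) ⟨j, h2⟩ ∈ Subgroup.closure {A, C} := by
    intro i j hij hjp h1 h2
    have hu : Equiv.swap (⟨i, h1⟩ : Fin n) ⟨p + 1, bp1⟩ ∈ Subgroup.closure {A, C} :=
      F3 i (p + 1) (by omega) (by omega) h1 bp1
    have hm : Equiv.swap (⟨j, h2⟩ : Fin n) ⟨p + 1, bp1⟩ ∈ Subgroup.closure {A, C} :=
      F3 j (p + 1) hjp (by omega) h2 bp1
    have step := swapS _ hu _ _ hm
    rw [show Equiv.swap (⟨i, h1⟩ : Fin n) ⟨p + 1, bp1⟩ ⟨j, h2⟩ = ⟨j, h2⟩ from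
        swap_fix _ _ _ _ _ _ (by omega) (by omega),
      show Equiv.swap (⟨i, h1⟩ : Fin n) ⟨p + 1, bp1⟩ ⟨p + 1, bp1⟩ = ⟨i, h1⟩ from
        Equiv.swap_apply_right _ _] at step
    rw [Equiv.swap_comm] at step
    exact step
  -- conclude
  rw [eq_top_iff, ← Equiv.Perm.closure_isSwap]
  rw [Subgroup.closure_le]
  intro σ hσ
  obtain ⟨x, y, hxy, rfl⟩ := hσ
  simp only [SetLike.mem_coe]
  obtain ⟨xv, hx⟩ := x
  obtain ⟨yv, hy⟩ := y
  have hne : xv ≠ yv := by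
    intro h; exact hxy (Fin.ext h)
  rcases lt_or_ge xv p with hx1 | hx1 <;> rcases lt_or_ge yv p with hy1 | hy1
  · rcases lt_or_gt_of_ne hne with h | h
    · exact F1 xv yv h hy1 hx hy
    · rw [Equiv.swap_comm]; exact F1 yv xv h hx1 hy hx
  · exact F3 xv yv hx1 hy1 hx hy
  · rw [Equiv.swap_comm]; exact F3 yv xv hy1 hx1 hy hx
  · exact F2s xv yv hx1 hy1 hne hx hy

/-- In `S_n` (`n ≥ 7`, realized on `Fin n` with `0`-based labels), with `p` an odd
prime, `p + 3 ≤ n`, let `a = (1, p+2, p+1)(2, p+3)` and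
`c = (1, 2, …, p)(p+1, …, n)`.  Then no automorphism of `S_n` sends `a ↦ a⁻¹` and
`c ↦ c⁻¹`, and `a, c` generate `S_n`. -/
theorem symmetricGroup_pair_no_inverting_automorphism_and_generates
    (n p : ℕ) (hn : 7 ≤ n) (hp : p.Prime) (hodd : Odd p) (hpn : p + 3 ≤ n) :
    let a : Equiv.Perm (Fin n) :=
      List.formPerm [⟨0, by omega⟩, ⟨p + 1, by omega⟩, ⟨p, by omega⟩] *
        Equiv.swap ⟨1, by omega⟩ ⟨p + 2, by omega⟩
    let c : Equiv.Perm (Fin n) :=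
      List.formPerm ((List.finRange n).take p) *
        List.formPerm ((List.finRange n).drop p)
    (¬ ∃ φ : MulAut (Equiv.Perm (Fin n)), φ a = a⁻¹ ∧ φ c = c⁻¹) ∧
      Subgroup.closure {a, c} = ⊤ := by
  intro a c
  have hne2 : p ≠ 2 := by
    intro h
    rw [h] at hodd
    simp [Nat.odd_iff] at hodd
  have hp3 : 3 ≤ p := by
    have := hp.two_le
    omega
  constructor
  · exact part1 n p hp3 hpn a c rfl rfl
  · exact part2 n p hp3 hpn a c rfl rfl
end
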